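/- arXiv:1505.06511 — 6 statements merged into one kernel-verified Lean document; each statement's English description precedes it below -/
import Mathlib

section
/- Let (d_k)_{k≥1} be a lacunary sequence of positive integers and (N_k)_{k≥1} positive integers with N_k | N_{k+1} and N_k < N_{k+1} for all k. Suppose there exists a constant c > 0 such that for every n and all analytic trigonometric polynomials f_1,…,f_n on T with deg f_k ≤ d_k, ∫_T (∑_{k=1}^n |f_k(t)|²)^{1/2} dμ(t) ≥ c · ∫_T (∑_{k=1}^n |(E^*_{N_k} f_k)(t)|²)^{1/2} dμ(t). Then there exist a ∈ ℕ and C > 0 such that d_k ≤ C·N_{k+a} for all k. -/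
/-!
Suppose `d_k > 4 N_{k+a}` for some `k`, with `a` large in terms of `c`. Put `M = k + a`,
`D = 2 N_M` and test the inequality on `f_j = e^{it} (∑_{r<D} e^{irt})²` for `k ≤ j ≤ M`
(`f_j = 0` for `j < k`), an analytic polynomial of degree `2D - 1 < d_k ≤ d_j`. Its modulus is
`D` times the Fejér kernel, so the right side equals `√(a+1) · D`. As `f_j = e^{iDt} |f_j|` and
`N_j ∣ D`, `|E*_{N_j} f_j|` is the average of the translates of the kernel along `2πℤ/N_j`.
For `k < j ≤ M`, the points of `2πℤ/N_j` off the coarser grid `2πℤ/N_{j-1}` are distinct points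
of `2πℤ/N_M`, at least `N_j/2` of them per level, and the kernel keeps mass `≥ N_M` within
`π/N_M` of each; hence the left side is at least `c · (a/2) · N_M`. So `c a ≤ 4√(a+1)`, which
fails for large `a`.
-/

open MeasureTheory Real

/-- The normalized Lebesgue measure `dt/2π` on (a fundamental domain of) `T = ℝ/2πℤ`,
realized as a probability measure on `ℝ` supported on `(0, 2π]`. -/
noncomputable def circleMeasure : Measure ℝ :=
  (ENNReal.ofReal (2 * π))⁻¹ • (volume.restrict (Set.Ioc 0 (2 * π)))

/-- `f` is an analytic trigonometric polynomial of degree at most `d`: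
`f t = ∑_{j=0}^{d} a_j e^{ijt}`. -/
def IsAnalyticTrigPoly (d : ℕ) (f : ℝ → ℂ) : Prop :=
  ∃ a : ℕ → ℂ, f = fun t : ℝ => ∑ j ∈ Finset.range (d + 1), a j * Complex.exp (Complex.I * j * (t : ℂ))

/-- The periodization operator `(E^*_N f)(t) = (1/N) ∑_{j=0}^{N-1} f(t + 2πj/N)`,
the conditional expectation onto `(2π/N)`-periodic functions. -/
noncomputable def Estar (N : ℕ) (f : ℝ → ℂ) : ℝ → ℂ :=
  fun t => (N : ℂ)⁻¹ * ∑ j ∈ Finset.range N, f (t + 2 * π * j / N)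

/-- A sequence of positive integers is lacunary if `inf_k d_{k+1}/d_k > 1`. -/
def IsLacunary (d : ℕ → ℕ) : Prop :=
  ∃ q : ℝ, 1 < q ∧ ∀ k, q * d k ≤ d (k + 1)

/-- The `L¹(ℓ²)` norm of a finite sequence of functions on the circle. -/
noncomputable def L1l2NormT (n : ℕ) (g : Fin n → ℝ → ℂ) : ℝ :=
  ∫ t, Real.sqrt (∑ k : Fin n, ‖g k t‖ ^ 2) ∂circleMeasure

/-- The independent-sum norm of a finite sequence of functions on the circle. -/
noncomputable def indNormT (n : ℕ) (g : Fin n → ℝ → ℂ) : ℝ :=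
  ∫ ω : Fin n → ℝ, Real.sqrt (∑ k : Fin n, ‖g k (ω k)‖ ^ 2) ∂(Measure.pi fun _ => circleMeasure)

open Finset Polynomial

noncomputable def dirichletSum (D : ℕ) (t : ℝ) : ℂ := ∑ r ∈ range D, Complex.exp (Complex.I * t) ^ r

/-- `D` times the Fejér kernel of order `D`. -/
noncomputable def fejer (D : ℕ) (t : ℝ) : ℝ := ‖dirichletSum D t‖ ^ 2

noncomputable def fejerPoly (D : ℕ) (t : ℝ) : ℂ :=
  Complex.exp (Complex.I * t) * dirichletSum D t ^ 2

lemma fejer_nonneg (D : ℕ) (t : ℝ) : 0 ≤ fejer D t := sq_nonneg _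

@[fun_prop]
lemma continuous_dirichletSum (D : ℕ) : Continuous (dirichletSum D) := by
  unfold dirichletSum; fun_prop

@[fun_prop]
lemma continuous_fejer (D : ℕ) : Continuous (fejer D) :=
  (continuous_dirichletSum D).norm.pow 2

lemma continuous_fejerPoly (D : ℕ) : Continuous (fejerPoly D) := by
  unfold fejerPoly; fun_prop

lemma expI_add_two_pi_mul_int (t : ℝ) (m : ℤ) :
    Complex.exp (Complex.I * ↑(t + 2 * π * m)) = Complex.exp (Complex.I * t) := by
  rw [show Complex.I * ↑(t + 2 * π * m) = Complex.I * t + m * (2 * π * Complex.I) by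
    push_cast; ring, Complex.exp_add, Complex.exp_int_mul_two_pi_mul_I, mul_one]

lemma conj_expI (t : ℝ) :
    starRingEnd ℂ (Complex.exp (Complex.I * t)) = Complex.exp (Complex.I * ↑(-t)) := by
  rw [← Complex.exp_conj]; simp

lemma conj_dirichletSum (D : ℕ) (t : ℝ) :
    starRingEnd ℂ (dirichletSum D t) = dirichletSum D (-t) := by
  simp [dirichletSum, conj_expI]

lemma fejer_neg (D : ℕ) (t : ℝ) : fejer D (-t) = fejer D t := by
  rw [fejer, fejer, ← conj_dirichletSum, Complex.norm_conj]

lemma fejer_add_two_pi_mul_int (D : ℕ) (t : ℝ) (m : ℤ) :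
    fejer D (t + 2 * π * m) = fejer D t := by
  simp only [fejer, dirichletSum, expI_add_two_pi_mul_int]

lemma fejer_two_pi_sub (D : ℕ) (t : ℝ) : fejer D (2 * π - t) = fejer D t := by
  simpa [sub_eq_neg_add, fejer_neg] using fejer_add_two_pi_mul_int D (-t) 1

lemma expI_pow_mul_conj_dirichletSum (D : ℕ) (t : ℝ) :
    Complex.exp (Complex.I * t) ^ (D - 1) * starRingEnd ℂ (dirichletSum D t) =
      dirichletSum D t := by
  have hinv : Complex.exp (Complex.I * t) * Complex.exp (Complex.I * ↑(-t)) = 1 := by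
    rw [← Complex.exp_add]; simp
  rw [conj_dirichletSum, dirichletSum, dirichletSum, mul_sum, ← sum_range_reflect]
  refine sum_congr rfl fun r hr => ?_
  set m := D - 1 - r
  rw [show D - 1 = r + m by have := mem_range.mp hr; omega, pow_add, mul_assoc, ← mul_pow, hinv,
    one_pow, mul_one]

lemma fejerPoly_eq (D : ℕ) (hD : 1 ≤ D) (t : ℝ) :
    fejerPoly D t = Complex.exp (Complex.I * t) ^ D * fejer D t := by
  have hfejer : (fejer D t : ℂ) = dirichletSum D t * starRingEnd ℂ (dirichletSum D t) := by
    rw [Complex.mul_conj, fejer, Complex.normSq_eq_norm_sq]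
  calc fejerPoly D t = Complex.exp (Complex.I * t) * dirichletSum D t *
        (Complex.exp (Complex.I * t) ^ (D - 1) * starRingEnd ℂ (dirichletSum D t)) := by
        rw [expI_pow_mul_conj_dirichletSum, fejerPoly]; ring
    _ = Complex.exp (Complex.I * t) ^ (1 + (D - 1)) * fejer D t := by rw [hfejer]; ring
    _ = Complex.exp (Complex.I * t) ^ D * fejer D t := by rw [Nat.add_sub_cancel' hD]

lemma norm_fejerPoly (D : ℕ) (t : ℝ) : ‖fejerPoly D t‖ = fejer D t := by
  rw [fejerPoly, norm_mul, Complex.norm_exp_I_mul_ofReal, one_mul, norm_pow, fejer]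

lemma periodic_fejer (D : ℕ) : Function.Periodic (fejer D) (2 * π) := fun t => by
  simpa using fejer_add_two_pi_mul_int D t 1

lemma fejer_eq_sum_cos (D : ℕ) (t : ℝ) :
    fejer D t = ∑ r ∈ range D, ∑ s ∈ range D, Real.cos (((r : ℝ) - s) * t) := by
  have hexp : (fejer D t : ℂ) =
      ∑ r ∈ range D, ∑ s ∈ range D, Complex.exp (↑(((r : ℝ) - s) * t) * Complex.I) := by
    rw [fejer, ← Complex.normSq_eq_norm_sq, Complex.normSq_eq_conj_mul_self, conj_dirichletSum,
      dirichletSum, dirichletSum, sum_mul_sum, sum_comm]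
    refine sum_congr rfl fun r _ => sum_congr rfl fun s _ => ?_
    rw [← Complex.exp_nat_mul, ← Complex.exp_nat_mul, ← Complex.exp_add]
    push_cast; ring_nf
  have hre := congrArg Complex.re hexp
  simpa only [Complex.ofReal_re, Complex.re_sum, Complex.exp_ofReal_mul_I_re] using hre

lemma integral_cos_nat_sub_mul (r s : ℕ) :
    ∫ t in (0 : ℝ)..2 * π, Real.cos (((r : ℝ) - s) * t) = if r = s then 2 * π else 0 := by
  split_ifs with h
  · simp [h]
  · have hk : (r : ℝ) - s ≠ 0 := sub_ne_zero.mpr (by exact_mod_cast h)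
    have hsin : Real.sin (((r : ℝ) - s) * (2 * π)) = 0 := by
      rw [show ((r : ℝ) - s) * (2 * π) = ((2 * ((r : ℤ) - s) : ℤ) : ℝ) * π by push_cast; ring,
        Real.sin_int_mul_pi]
    simp [intervalIntegral.integral_comp_mul_left Real.cos hk, hsin]

lemma integral_fejer (D : ℕ) : ∫ t in (0 : ℝ)..2 * π, fejer D t = 2 * π * D := by
  have hcos : ∀ x : ℝ, Continuous fun t : ℝ => Real.cos (x * t) := fun x => by fun_prop
  simp_rw [fejer_eq_sum_cos]
  rw [intervalIntegral.integral_finsetSum fun r _ =>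
    (continuous_finsetSum _ fun s _ => hcos _).intervalIntegrable _ _]
  simp_rw [intervalIntegral.integral_finsetSum fun s _ => (hcos _).intervalIntegrable _ _,
    integral_cos_nat_sub_mul, sum_ite_eq, mem_range]
  rw [sum_ite_of_true fun r hr => mem_range.mp hr, sum_const, card_range, nsmul_eq_mul]; ring

lemma norm_dirichletSum_le (D : ℕ) {t : ℝ} (ht : 0 < t) (htπ : t ≤ π) :
    ‖dirichletSum D t‖ ≤ π / t := by
  have hden : 2 * t / π ≤ ‖Complex.exp (Complex.I * t) - 1‖ := by
    have hsin := Real.mul_le_sin (x := t / 2) (by positivity) (by linarith)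
    rw [Complex.norm_exp_I_mul_ofReal_sub_one, Real.norm_eq_abs,
      abs_of_nonneg (by linarith [show 0 ≤ 2 / π * (t / 2) by positivity])]
    linarith [show 2 * t / π = 2 * (2 / π * (t / 2)) by ring]
  have hden0 : 0 < 2 * t / π := by positivity
  have hnum : ‖Complex.exp (Complex.I * t) ^ D - 1‖ ≤ 2 := by
    have := norm_sub_le (Complex.exp (Complex.I * t) ^ D) 1
    rwa [norm_pow, Complex.norm_exp_I_mul_ofReal, one_pow, norm_one, one_add_one_eq_two] at this
  have hne : Complex.exp (Complex.I * t) ≠ 1 := fun h => by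
    rw [h, sub_self, norm_zero] at hden; linarith
  rw [dirichletSum, geom_sum_eq hne, norm_div]
  calc _ ≤ 2 / (2 * t / π) := div_le_div₀ zero_le_two hnum hden0 hden
    _ = π / t := by field_simp

lemma integral_fejer_tail_le (D : ℕ) {δ : ℝ} (hδ : 0 < δ) (hδπ : δ ≤ π) :
    ∫ t in δ..π, fejer D t ≤ π ^ 2 / δ := by
  have hpos : ∀ t ∈ Set.uIcc δ π, 0 < t := fun t ht => by
    rw [Set.uIcc_of_le hδπ] at ht; exact hδ.trans_le ht.1
  have hderiv : ∀ t ∈ Set.uIcc δ π, HasDerivAt (fun t => -π ^ 2 / t) ((π / t) ^ 2) t :=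
    fun t ht => by
      simpa [div_eq_mul_inv, mul_pow] using (hasDerivAt_inv (hpos t ht).ne').const_mul (-π ^ 2)
  have hcont : ContinuousOn (fun t : ℝ => (π / t) ^ 2) (Set.uIcc δ π) :=
    (continuousOn_const.div continuousOn_id fun t ht => (hpos t ht).ne').pow 2
  calc ∫ t in δ..π, fejer D t ≤ ∫ t in δ..π, (π / t) ^ 2 := by
        refine intervalIntegral.integral_mono_on hδπ ((continuous_fejer D).intervalIntegrable _ _)
          (hcont.intervalIntegrable) fun t ht => ?_
        exact pow_le_pow_left₀ (norm_nonneg _)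
          (norm_dirichletSum_le D (hpos t (Set.Icc_subset_uIcc ht)) ht.2) 2
    _ = π ^ 2 / δ - π := by
        rw [intervalIntegral.integral_eq_sub_of_hasDerivAt hderiv hcont.intervalIntegrable]
        field_simp; ring
    _ ≤ π ^ 2 / δ := by linarith [pi_pos]

lemma le_integral_fejer_symm (D : ℕ) {δ : ℝ} (hδ : 0 < δ) (hδπ : δ ≤ π) :
    2 * π * D - 2 * π ^ 2 / δ ≤ ∫ t in -δ..δ, fejer D t := by
  have hint : ∀ a b : ℝ, IntervalIntegrable (fejer D) volume a b :=
    fun a b => (continuous_fejer D).intervalIntegrable a b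
  have hperiod : ∫ t in -δ..(2 * π - δ), fejer D t = 2 * π * D := by
    rw [← integral_fejer, show 2 * π - δ = -δ + 2 * π by ring,
      (periodic_fejer D).intervalIntegral_add_eq (-δ) 0, zero_add]
  have hreflect : ∫ t in π..(2 * π - δ), fejer D t = ∫ t in δ..π, fejer D t := by
    have h := intervalIntegral.integral_comp_sub_left (fejer D) (2 * π) (a := δ) (b := π)
    simp only [fejer_two_pi_sub] at h
    rwa [show 2 * π - π = π by ring, eq_comm] at h
  have hsplit := intervalIntegral.integral_add_adjacent_intervals (hint (-δ) δ) (hint δ π)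
  have hsplit' :=
    intervalIntegral.integral_add_adjacent_intervals (hint (-δ) π) (hint π (2 * π - δ))
  linarith [integral_fejer_tail_le D hδ hδπ, show 2 * π ^ 2 / δ = 2 * (π ^ 2 / δ) by ring]

lemma isAnalyticTrigPoly_eval (P : ℂ[X]) {d : ℕ} (hP : P.natDegree ≤ d) :
    IsAnalyticTrigPoly d fun t => P.eval (Complex.exp (Complex.I * t)) := by
  refine ⟨P.coeff, funext fun t => ?_⟩
  rw [eval_eq_sum_range' (Nat.lt_succ_of_le hP)]
  refine sum_congr rfl fun j _ => ?_
  rw [← Complex.exp_nat_mul]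
  ring_nf

lemma isAnalyticTrigPoly_zero (d : ℕ) : IsAnalyticTrigPoly d 0 := by
  simpa [Pi.zero_def] using isAnalyticTrigPoly_eval 0 (Nat.zero_le d)

lemma isAnalyticTrigPoly_fejerPoly {D d : ℕ} (hD : 1 ≤ D) (hd : 2 * D - 1 ≤ d) :
    IsAnalyticTrigPoly d (fejerPoly D) := by
  have hsum : (∑ r ∈ range D, (X : ℂ[X]) ^ r).natDegree ≤ D - 1 :=
    natDegree_sum_le_of_forall_le _ _ fun r hr =>
      (natDegree_X_pow_le r).trans (by have := mem_range.mp hr; omega)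
  have hdeg : (X * (∑ r ∈ range D, (X : ℂ[X]) ^ r) ^ 2).natDegree ≤ d :=
    (natDegree_mul_le.trans (add_le_add natDegree_X_le (natDegree_pow_le.trans
      (Nat.mul_le_mul_left 2 hsum)))).trans (by omega)
  convert isAnalyticTrigPoly_eval _ hdeg using 1
  ext t
  simp [fejerPoly, dirichletSum, eval_finsetSum]

lemma expI_add_two_pi_mul_div_pow {N D : ℕ} (hND : N ∣ D) (t : ℝ) (r : ℕ) :
    Complex.exp (Complex.I * ↑(t + 2 * π * r / N)) ^ D = Complex.exp (Complex.I * t) ^ D := by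
  obtain ⟨q, rfl⟩ := hND
  rcases eq_or_ne N 0 with rfl | hN
  · simp
  rw [← Complex.exp_nat_mul, ← Complex.exp_nat_mul,
    show ((N * q : ℕ) : ℂ) * (Complex.I * ↑(t + 2 * π * r / N)) =
      (N * q : ℕ) * (Complex.I * t) + ((r * q : ℕ) : ℤ) * (2 * π * Complex.I) by
      push_cast; field_simp, Complex.exp_add, Complex.exp_int_mul_two_pi_mul_I, mul_one]

/-- Since `fejerPoly D = e^{iDt} fejer D` and `e^{iDt}` is `2π/N`-periodic, averaging over
`N`-th roots only averages the nonnegative factor `fejer D`. -/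
lemma norm_Estar_fejerPoly {N D : ℕ} (hD : 1 ≤ D) (hND : N ∣ D) (t : ℝ) :
    ‖Estar N (fejerPoly D) t‖ = (N : ℝ)⁻¹ * ∑ r ∈ range N, fejer D (t + 2 * π * r / N) := by
  have h : Estar N (fejerPoly D) t = Complex.exp (Complex.I * t) ^ D *
      (((N : ℝ)⁻¹ * ∑ r ∈ range N, fejer D (t + 2 * π * r / N) : ℝ) : ℂ) := by
    simp only [Estar, fejerPoly_eq D hD, expI_add_two_pi_mul_div_pow hND, ← mul_sum]
    push_cast; ring
  rw [h, norm_mul, norm_pow, Complex.norm_exp_I_mul_ofReal, one_pow, one_mul, Complex.norm_real,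
    Real.norm_of_nonneg (mul_nonneg (by positivity) (sum_nonneg fun r _ => fejer_nonneg D _))]

lemma integral_circleMeasure (f : ℝ → ℝ) :
    ∫ t, f t ∂circleMeasure = (2 * π)⁻¹ * ∫ t in (0 : ℝ)..2 * π, f t := by
  rw [circleMeasure, integral_smul_measure, intervalIntegral.integral_of_le two_pi_pos.le,
    ENNReal.toReal_inv, ENNReal.toReal_ofReal two_pi_pos.le, smul_eq_mul]

lemma integral_indicator_circleMeasure {A : Set ℝ} (hA : MeasurableSet A)
    (hsub : A ⊆ Set.Ioc 0 (2 * π)) (f : ℝ → ℝ) :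
    ∫ t, A.indicator f t ∂circleMeasure = (2 * π)⁻¹ * ∫ t in A, f t := by
  rw [circleMeasure, integral_smul_measure, integral_indicator hA, Measure.restrict_restrict hA,
    Set.inter_eq_left.mpr hsub, ENNReal.toReal_inv, ENNReal.toReal_ofReal two_pi_pos.le,
    smul_eq_mul]

lemma Continuous.integrable_circleMeasure {E : Type*} [NormedAddCommGroup E] {f : ℝ → E}
    (hf : Continuous f) : Integrable f circleMeasure :=
  (hf.integrableOn_Icc.mono_set Set.Ioc_subset_Icc_self).smul_measure
    (ENNReal.inv_ne_top.mpr (by simp [pi_pos]))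

lemma Continuous.Estar {f : ℝ → ℂ} (hf : Continuous f) (N : ℕ) : Continuous (Estar N f) :=
  continuous_const.mul (continuous_finsetSum _ fun _ _ => hf.comp (continuous_add_const _))

lemma dvd_of_le_of_forall_dvd_succ {N : ℕ → ℕ} (hdvd : ∀ j, N j ∣ N (j + 1)) {i j : ℕ}
    (hij : i ≤ j) : N i ∣ N j :=
  Nat.rel_of_forall_rel_succ_of_le (· ∣ ·) hdvd hij

lemma two_le_div_of_dvd_of_lt {m n : ℕ} (hm : 0 < m) (hdvd : m ∣ n) (hlt : m < n) :
    2 ≤ n / m := by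
  obtain ⟨q, rfl⟩ := hdvd
  rw [Nat.mul_div_cancel_left q hm]
  by_contra! hq
  interval_cases q <;> omega

lemma le_two_mul_card_filter_not_dvd {q : ℕ} (hq : 2 ≤ q) (n : ℕ) :
    n ≤ 2 * #{s ∈ Ioc 0 n | ¬ q ∣ s} := by
  have hsplit := card_filter_add_card_filter_not (s := Ioc 0 n) (q ∣ ·)
  rw [Nat.Ioc_filter_dvd_card_eq_div, Nat.card_Ioc] at hsplit
  have := Nat.div_le_div_left hq two_pos (a := n)
  omega

/-- `(j, s)` stands for the point `2πs/N_j` of the `j`-th grid that is not on the `(j-1)`-th one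
(`N_j/N_{j-1} ∤ s`), for `k < j ≤ M`. -/
def freshGridPoints (N : ℕ → ℕ) (k M : ℕ) : Finset ((_ : ℕ) × ℕ) :=
  (Ioc k M).sigma fun j => (Ioc 0 (N j)).filter fun s => ¬ N j / N (j - 1) ∣ s

noncomputable def gridPoint (N : ℕ → ℕ) (x : (_ : ℕ) × ℕ) : ℝ := 2 * π * x.2 / N x.1

lemma mem_freshGridPoints {N : ℕ → ℕ} {k M : ℕ} {x : (_ : ℕ) × ℕ} :
    x ∈ freshGridPoints N k M ↔
      (k < x.1 ∧ x.1 ≤ M) ∧ (0 < x.2 ∧ x.2 ≤ N x.1) ∧ ¬ N x.1 / N (x.1 - 1) ∣ x.2 := by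
  simp [freshGridPoints]

lemma le_sum_inv_freshGridPoints {N : ℕ → ℕ} (hN : ∀ j, 0 < N j) (hdvd : ∀ j, N j ∣ N (j + 1))
    (hmono : ∀ j, N j < N (j + 1)) (k a : ℕ) :
    (a : ℝ) / 2 ≤ ∑ x ∈ freshGridPoints N k (k + a), (N x.1 : ℝ)⁻¹ := by
  rw [freshGridPoints, sum_sigma]
  calc (a : ℝ) / 2 = ∑ _j ∈ Ioc k (k + a), (1 / 2 : ℝ) := by
        rw [sum_const, Nat.card_Ioc, nsmul_eq_mul, Nat.add_sub_cancel_left]; ring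
    _ ≤ _ := sum_le_sum fun j hj => ?_
  obtain ⟨i, rfl⟩ : ∃ i, j = i + 1 := ⟨j - 1, by have := (mem_Ioc.mp hj).1; omega⟩
  have hcard := le_two_mul_card_filter_not_dvd
    (two_le_div_of_dvd_of_lt (hN i) (hdvd i) (hmono i)) (N (i + 1))
  have hNpos : (0 : ℝ) < N (i + 1) := by exact_mod_cast hN (i + 1)
  simp only [sum_const, nsmul_eq_mul, Nat.add_sub_cancel]
  rw [← div_eq_mul_inv, le_div_iff₀ hNpos]
  have hcard' : (N (i + 1) : ℝ) ≤ 2 * #{s ∈ Ioc 0 (N (i + 1)) | ¬ N (i + 1) / N i ∣ s} := by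
    exact_mod_cast hcard
  linarith

def gridLabel (N : ℕ → ℕ) (M : ℕ) (x : (_ : ℕ) × ℕ) : ℕ := x.2 * (N M / N x.1)

lemma gridPoint_eq_gridLabel {N : ℕ → ℕ} (hN : ∀ j, 0 < N j) (hdvd : ∀ j, N j ∣ N (j + 1))
    {k M : ℕ} {x : (_ : ℕ) × ℕ} (hx : x ∈ freshGridPoints N k M) :
    gridPoint N x = 2 * π / N M * gridLabel N M x := by
  obtain ⟨A, hA⟩ := dvd_of_le_of_forall_dvd_succ hdvd (mem_freshGridPoints.mp hx).1.2
  have hx0 : (N x.1 : ℝ) ≠ 0 := by exact_mod_cast (hN x.1).ne'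
  have hA0 : (A : ℝ) ≠ 0 := by
    rintro h; have := hN M; simp_all
  rw [gridPoint, gridLabel, hA, Nat.mul_div_cancel_left A (hN x.1)]
  push_cast
  field_simp

/-- A fresh point of the `j`-th grid lies on no coarser grid, so distinct fresh points are
distinct points of the finest grid. -/
lemma injOn_gridLabel {N : ℕ → ℕ} (hN : ∀ j, 0 < N j) (hdvd : ∀ j, N j ∣ N (j + 1)) (k M : ℕ) :
    Set.InjOn (gridLabel N M) (freshGridPoints N k M) := by
  intro x hx y hy h
  wlog hxy : x.1 ≤ y.1 generalizing x y
  · exact (this hy hx h.symm (le_of_not_ge hxy)).symm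
  obtain ⟨⟨-, hyM⟩, -, hyfresh⟩ := mem_freshGridPoints.mp hy
  set q := N y.1 / N (y.1 - 1)
  obtain ⟨A, hA⟩ := dvd_of_le_of_forall_dvd_succ hdvd hyM
  obtain ⟨B, hB⟩ := dvd_of_le_of_forall_dvd_succ hdvd hxy
  have hA0 : 0 < A := Nat.pos_of_ne_zero fun h => by have := hN M; simp_all
  simp only [gridLabel] at h
  rw [hA, Nat.mul_div_cancel_left A (hN y.1), hB, mul_assoc,
    Nat.mul_div_cancel_left _ (hN x.1), ← mul_assoc] at h
  have hyB : y.2 = x.2 * B := (Nat.eq_of_mul_eq_mul_right hA0 h).symm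
  rcases hxy.eq_or_lt with hxy | hxy
  · have hB1 : B = 1 := by
      rw [← hxy] at hB
      exact (Nat.eq_of_mul_eq_mul_left (hN x.1) (hB.symm.trans (mul_one _).symm))
    exact Sigma.ext hxy (heq_of_eq (by rw [hyB, hB1, mul_one]))
  · exfalso
    obtain ⟨C, hC⟩ := dvd_of_le_of_forall_dvd_succ hdvd (Nat.le_sub_one_of_lt hxy)
    have hstep : N y.1 = N (y.1 - 1) * q :=
      (Nat.mul_div_cancel' (dvd_of_le_of_forall_dvd_succ hdvd (Nat.sub_le _ 1))).symm
    have hBC : B = C * q := by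
      apply Nat.eq_of_mul_eq_mul_left (hN x.1)
      rw [← hB, hstep, hC, mul_assoc]
    exact hyfresh ⟨x.2 * C, by rw [hyB, hBC]; ring⟩

lemma le_abs_gridPoint_sub {N : ℕ → ℕ} (hN : ∀ j, 0 < N j) (hdvd : ∀ j, N j ∣ N (j + 1))
    {k M : ℕ} {x y : (_ : ℕ) × ℕ} (hx : x ∈ freshGridPoints N k M)
    (hy : y ∈ freshGridPoints N k M) (hxy : x ≠ y) :
    2 * π / N M ≤ |gridPoint N x - gridPoint N y| := by
  have hlabel : gridLabel N M x ≠ gridLabel N M y := (injOn_gridLabel hN hdvd k M).ne hx hy hxy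
  have hone : (1 : ℝ) ≤ |(gridLabel N M x : ℝ) - gridLabel N M y| := by
    exact_mod_cast Int.one_le_abs (sub_ne_zero.mpr (Int.natCast_inj.not.mpr hlabel))
  rw [gridPoint_eq_gridLabel hN hdvd hx, gridPoint_eq_gridLabel hN hdvd hy, ← mul_sub, abs_mul,
    abs_of_pos (by have := hN M; positivity)]
  exact le_mul_of_one_le_right (by positivity) hone

lemma Ioo_gridPoint_subset {N : ℕ → ℕ} (hN : ∀ j, 0 < N j) (hdvd : ∀ j, N j ∣ N (j + 1))
    {k M : ℕ} {x : (_ : ℕ) × ℕ} (hx : x ∈ freshGridPoints N k M) :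
    Set.Ioo (gridPoint N x - π / N M) (gridPoint N x + π / N M) ⊆ Set.Ioc 0 (2 * π) := by
  obtain ⟨⟨-, hxM⟩, ⟨hs0, hsN⟩, hfresh⟩ := mem_freshGridPoints.mp hx
  have hslt : x.2 + 1 ≤ N x.1 := by
    rcases hsN.lt_or_eq with h | h
    · exact h
    · rw [h] at hfresh
      exact absurd (Nat.div_dvd_of_dvd (dvd_of_le_of_forall_dvd_succ hdvd (Nat.sub_le _ 1))) hfresh
  have hx0 : (0 : ℝ) < N x.1 := by exact_mod_cast hN x.1
  have hδ : π / N M ≤ π / N x.1 := div_le_div_of_nonneg_left pi_pos.le hx0 (by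
    exact_mod_cast Nat.le_of_dvd (hN M) (dvd_of_le_of_forall_dvd_succ hdvd hxM))
  have hgp : gridPoint N x = π / N x.1 * (2 * x.2) := by rw [gridPoint]; ring
  have h2π : 2 * π = π / N x.1 * (2 * N x.1) := by field_simp
  have hs1 : (1 : ℝ) ≤ x.2 := by exact_mod_cast hs0
  have hsn : (x.2 : ℝ) + 1 ≤ N x.1 := by exact_mod_cast hslt
  rintro t ⟨ht1, ht2⟩
  constructor <;> nlinarith

lemma sum_indicator_le_of_pairwiseDisjoint {ι α : Type*} {s : Finset ι} {W : ι → Set α}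
    {g : ι → α → ℝ} {t : α} {B : ℝ} (hW : (s : Set ι).PairwiseDisjoint W) (hB : 0 ≤ B)
    (hg : ∀ i ∈ s, t ∈ W i → g i t ≤ B) : ∑ i ∈ s, (W i).indicator (g i) t ≤ B := by
  by_cases hex : ∃ i ∈ s, t ∈ W i
  · obtain ⟨i, hi, hti⟩ := hex
    rw [sum_eq_single_of_mem i hi fun j hj hji => Set.indicator_of_notMem
      (fun htj => Set.disjoint_left.mp (hW hj hi hji) htj hti) _, Set.indicator_of_mem hti]
    exact hg i hi hti
  · push Not at hex
    rwa [sum_eq_zero fun i hi => Set.indicator_of_notMem (hex i hi) _]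

lemma inv_mul_fejer_sub_le_norm_Estar {n D s : ℕ} (hD : 1 ≤ D) (hnD : n ∣ D) (hs : 0 < s)
    (hsn : s ≤ n) (t : ℝ) :
    (n : ℝ)⁻¹ * fejer D (t - 2 * π * s / n) ≤ ‖Estar n (fejerPoly D) t‖ := by
  have hn : (n : ℝ) ≠ 0 := by exact_mod_cast (hs.trans_le hsn).ne'
  have hshift : t - 2 * π * s / n = t + 2 * π * ((n - s : ℕ) : ℝ) / n + 2 * π * (-1 : ℤ) := by
    rw [Nat.cast_sub hsn]; field_simp; push_cast; ring
  rw [hshift, fejer_add_two_pi_mul_int, norm_Estar_fejerPoly hD hnD]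
  gcongr
  exact single_le_sum (f := fun r : ℕ => fejer D (t + 2 * π * r / n))
    (fun r _ => fejer_nonneg D _) (mem_range.mpr (by omega))

lemma pairwiseDisjoint_Ioo_gridPoint {N : ℕ → ℕ} (hN : ∀ j, 0 < N j)
    (hdvd : ∀ j, N j ∣ N (j + 1)) (k M : ℕ) :
    (freshGridPoints N k M : Set ((_ : ℕ) × ℕ)).PairwiseDisjoint
      fun x => Set.Ioo (gridPoint N x - π / N M) (gridPoint N x + π / N M) := by
  intro x hx y hy hxy
  have hsep := le_abs_gridPoint_sub hN hdvd hx hy hxy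
  rw [Function.onFun, Set.disjoint_left]
  rintro u ⟨hxu, hux⟩ ⟨hyu, huy⟩
  have : |gridPoint N x - gridPoint N y| < 2 * π / N M := by
    rw [abs_lt]; constructor <;> linarith [show 2 * π / N M = 2 * (π / N M) by ring]
  linarith

/-- Cut off at half the mesh `2π/N_M` of the finest grid, so that bumps at distinct fresh points
have disjoint supports. -/
noncomputable def gridBump (N : ℕ → ℕ) (M : ℕ) (x : (_ : ℕ) × ℕ) : ℝ → ℝ :=
  (Set.Ioo (gridPoint N x - π / N M) (gridPoint N x + π / N M)).indicator
    fun u => (N x.1 : ℝ)⁻¹ * fejer (2 * N M) (u - gridPoint N x)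

lemma integrable_gridBump (N : ℕ → ℕ) (M : ℕ) (x : (_ : ℕ) × ℕ) :
    Integrable (gridBump N M x) circleMeasure :=
  (Continuous.integrable_circleMeasure (by fun_prop)).indicator
    measurableSet_Ioo

lemma integral_gridBump {N : ℕ → ℕ} (hN : ∀ j, 0 < N j) (hdvd : ∀ j, N j ∣ N (j + 1))
    {k M : ℕ} {x : (_ : ℕ) × ℕ} (hx : x ∈ freshGridPoints N k M) :
    ∫ t, gridBump N M x t ∂circleMeasure =
      (N x.1 : ℝ)⁻¹ * ((2 * π)⁻¹ * ∫ u in -(π / N M)..π / N M, fejer (2 * N M) u) := by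
  have hδ : 0 ≤ π / N M := by positivity
  rw [gridBump,
    integral_indicator_circleMeasure measurableSet_Ioo (Ioo_gridPoint_subset hN hdvd hx),
    ← integral_Ioc_eq_integral_Ioo, ← intervalIntegral.integral_of_le (by linarith),
    intervalIntegral.integral_const_mul, intervalIntegral.integral_comp_sub_right]
  ring_nf

noncomputable def testFamily (D k n : ℕ) : Fin n → ℝ → ℂ :=
  fun j => if k ≤ (j : ℕ) then fejerPoly D else 0

lemma sum_gridBump_le {N : ℕ → ℕ} (hN : ∀ j, 0 < N j) (hdvd : ∀ j, N j ∣ N (j + 1))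
    (k a : ℕ) (t : ℝ) :
    ∑ x ∈ freshGridPoints N k (k + a), gridBump N (k + a) x t ≤
      √(∑ j : Fin (k + a + 1),
        ‖Estar (N j) (testFamily (2 * N (k + a)) k (k + a + 1) j) t‖ ^ 2) := by
  refine sum_indicator_le_of_pairwiseDisjoint (pairwiseDisjoint_Ioo_gridPoint hN hdvd k _)
    (Real.sqrt_nonneg _) fun x hx _ => ?_
  obtain ⟨⟨hkx, hxM⟩, ⟨hs0, hsN⟩, -⟩ := mem_freshGridPoints.mp hx
  let j : Fin (k + a + 1) := ⟨x.1, by omega⟩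
  have hfj : testFamily (2 * N (k + a)) k (k + a + 1) j = fejerPoly (2 * N (k + a)) :=
    if_pos hkx.le
  have hdvdD : N x.1 ∣ 2 * N (k + a) := (dvd_of_le_of_forall_dvd_succ hdvd hxM).mul_left 2
  calc _ ≤ ‖Estar (N j) (testFamily (2 * N (k + a)) k (k + a + 1) j) t‖ := by
        rw [hfj]
        exact inv_mul_fejer_sub_le_norm_Estar (by have := hN (k + a); omega) hdvdD hs0 hsN t
    _ ≤ _ := (Real.le_sqrt (norm_nonneg _) (sum_nonneg fun _ _ => sq_nonneg _)).mpr
        (single_le_sum (f := fun i : Fin (k + a + 1) =>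
          ‖Estar (N i) (testFamily (2 * N (k + a)) k (k + a + 1) i) t‖ ^ 2)
          (fun _ _ => sq_nonneg _) (mem_univ j))

lemma continuous_testFamily (D k n : ℕ) (j : Fin n) : Continuous (testFamily D k n j) := by
  unfold testFamily
  split_ifs
  exacts [continuous_fejerPoly D, continuous_const]

lemma le_integral_sqrt_sum_sq_Estar_testFamily {N : ℕ → ℕ} (hN : ∀ j, 0 < N j)
    (hdvd : ∀ j, N j ∣ N (j + 1)) (hmono : ∀ j, N j < N (j + 1)) (k a : ℕ) :
    (a : ℝ) / 2 * N (k + a) ≤ ∫ t, √(∑ j : Fin (k + a + 1),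
      ‖Estar (N j) (testFamily (2 * N (k + a)) k (k + a + 1) j) t‖ ^ 2) ∂circleMeasure := by
  set M := k + a
  have hM : (0 : ℝ) < N M := by exact_mod_cast hN M
  have hconc : (N M : ℝ) ≤ (2 * π)⁻¹ * ∫ u in -(π / N M)..π / N M, fejer (2 * N M) u := by
    have h := le_integral_fejer_symm (2 * N M) (δ := π / N M) (by positivity)
      (div_le_self pi_pos.le (by exact_mod_cast hN M))
    rw [le_inv_mul_iff₀ two_pi_pos]
    have : 2 * π ^ 2 / (π / N M) = 2 * π * N M := by field_simp
    push_cast at h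
    linarith
  have hcont : Continuous fun t => √(∑ j : Fin (M + 1),
      ‖Estar (N j) (testFamily (2 * N M) k (M + 1) j) t‖ ^ 2) :=
    (continuous_finsetSum _ fun j _ =>
      (((continuous_testFamily _ _ _ j).Estar _).norm.pow 2)).sqrt
  calc (a : ℝ) / 2 * N M ≤ (∑ x ∈ freshGridPoints N k M, (N x.1 : ℝ)⁻¹) *
        ((2 * π)⁻¹ * ∫ u in -(π / N M)..π / N M, fejer (2 * N M) u) :=
        mul_le_mul (le_sum_inv_freshGridPoints hN hdvd hmono k a) hconc hM.le
          (sum_nonneg fun _ _ => by positivity)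
    _ = ∫ t, ∑ x ∈ freshGridPoints N k M, gridBump N M x t ∂circleMeasure := by
        rw [integral_finsetSum _ fun x _ => integrable_gridBump N M x, sum_mul]
        exact sum_congr rfl fun x hx => (integral_gridBump hN hdvd hx).symm
    _ ≤ _ := integral_mono (integrable_finsetSum _ fun x _ => integrable_gridBump N M x)
        hcont.integrable_circleMeasure (sum_gridBump_le hN hdvd k a)

lemma integral_sqrt_sum_sq_testFamily (D k a : ℕ) :
    ∫ t, √(∑ j : Fin (k + a + 1), ‖testFamily D k (k + a + 1) j t‖ ^ 2) ∂circleMeasure =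
      √(a + 1) * D := by
  have hsum : ∀ t, ∑ j : Fin (k + a + 1), ‖testFamily D k (k + a + 1) j t‖ ^ 2 =
      (a + 1) * fejer D t ^ 2 := fun t => by
    simp only [testFamily]
    rw [Fin.sum_univ_eq_sum_range (fun j => ‖(if k ≤ j then fejerPoly D else 0) t‖ ^ 2),
      add_assoc, sum_range_add, sum_eq_zero fun j hj => by simp [(mem_range.mp hj).not_ge]]
    simp [norm_fejerPoly]
  simp_rw [hsum, Real.sqrt_mul (by positivity : (0 : ℝ) ≤ a + 1),
    Real.sqrt_sq (fejer_nonneg _ _)]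
  rw [integral_const_mul, integral_circleMeasure, integral_fejer]
  field_simp

lemma IsLacunary.monotone {d : ℕ → ℕ} (h : IsLacunary d) : Monotone d := by
  obtain ⟨q, hq, hd⟩ := h
  refine monotone_nat_of_le_succ fun k => ?_
  have : (d k : ℝ) ≤ d (k + 1) := by nlinarith [hd k, (d k).cast_nonneg (α := ℝ)]
  exact_mod_cast this

lemma exists_nat_four_mul_sqrt_lt {c : ℝ} (hc : 0 < c) : ∃ a : ℕ, 4 * √(a + 1) < c * a := by
  refine ⟨⌈32 / c ^ 2⌉₊ + 1, ?_⟩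
  set a : ℕ := ⌈32 / c ^ 2⌉₊ + 1
  have ha1 : (1 : ℝ) ≤ a := by exact_mod_cast Nat.le_add_left 1 _
  have hca : 32 < c ^ 2 * a := by
    have := Nat.le_ceil (32 / c ^ 2)
    rw [div_le_iff₀ (by positivity)] at this
    push_cast [a]
    nlinarith
  rw [← lt_div_iff₀' four_pos, Real.sqrt_lt' (by positivity)]
  nlinarith

theorem stmt3_general (d N : ℕ → ℕ) (hN : ∀ k, 0 < N k)
    (hlac : IsLacunary d) (hdvd : ∀ k, N k ∣ N (k + 1)) (hmono : ∀ k, N k < N (k + 1))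
    (c : ℝ) (hc : 0 < c)
    (hineq : ∀ (n : ℕ) (f : Fin n → ℝ → ℂ),
      (∀ k : Fin n, IsAnalyticTrigPoly (d (k : ℕ)) (f k)) →
      c * ∫ t, Real.sqrt (∑ k : Fin n, ‖Estar (N (k : ℕ)) (f k) t‖ ^ 2) ∂circleMeasure
        ≤ ∫ t, Real.sqrt (∑ k : Fin n, ‖f k t‖ ^ 2) ∂circleMeasure) :
    ∃ (a : ℕ) (C : ℝ), 0 < C ∧ ∀ k, (d k : ℝ) ≤ C * N (k + a) := by
  by_contra! hcon
  obtain ⟨a, ha⟩ := exists_nat_four_mul_sqrt_lt hc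
  obtain ⟨k, hk⟩ := hcon a 4 four_pos
  have hdk : 4 * N (k + a) < d k := by exact_mod_cast hk
  have hpoly (j : Fin (k + a + 1)) :
      IsAnalyticTrigPoly (d j) (testFamily (2 * N (k + a)) k (k + a + 1) j) := by
    unfold testFamily
    split_ifs with hkj
    · have := hlac.monotone hkj
      exact isAnalyticTrigPoly_fejerPoly (by have := hN (k + a); omega) (by omega)
    · exact isAnalyticTrigPoly_zero _
  have hupper := hineq _ _ hpoly
  rw [integral_sqrt_sum_sq_testFamily] at hupper
  have hlower := mul_le_mul_of_nonneg_left
    (le_integral_sqrt_sum_sq_Estar_testFamily hN hdvd hmono k a) hc.le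
  have hNpos : (0 : ℝ) < N (k + a) := by exact_mod_cast hN (k + a)
  push_cast at hupper
  have hca : c * a ≤ 4 * √(a + 1) := le_of_mul_le_mul_right (by nlinarith) hNpos
  linarith

/-- Theorem `stein`, implication (ii) ⟹ (i). -/
theorem stmt3 (d N : ℕ → ℕ) (hd : ∀ k, 0 < d k) (hN : ∀ k, 0 < N k)
    (hlac : IsLacunary d) (hdvd : ∀ k, N k ∣ N (k + 1)) (hmono : ∀ k, N k < N (k + 1))
    (c : ℝ) (hc : 0 < c)
    (hineq : ∀ (n : ℕ) (f : Fin n → ℝ → ℂ),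
      (∀ k : Fin n, IsAnalyticTrigPoly (d (k : ℕ)) (f k)) →
      c * ∫ t, Real.sqrt (∑ k : Fin n, ‖Estar (N (k : ℕ)) (f k) t‖ ^ 2) ∂circleMeasure
        ≤ ∫ t, Real.sqrt (∑ k : Fin n, ‖f k t‖ ^ 2) ∂circleMeasure) :
    ∃ (a : ℕ) (C : ℝ), 0 < C ∧ ∀ k, (d k : ℝ) ≤ C * N (k + a) :=
  stmt3_general d N hN hlac hdvd hmono c hc hineq
end

section
/- Let (Ω,F,μ) be a probability space and F^*_1 ⊇ F^*_2 ⊇ … ⊇ F^*_{n+1} a decreasing sequence of sub-σ-algebras of F. Let φ_1,…,φ_n be integrable real-valued functions such that φ_k is F^*_k-measurable for each k. Define λ_0 = 0 and λ_k = E[ (φ_k² + λ_{k−1}²)^{1/2} | F^*_{k+1} ] for k = 1,…,n. Then the infimum of E (∑_{k=1}^n f_k²)^{1/2} over all n-tuples of integrable real-valued functions f_1,…,f_n satisfying E[f_k | F^*_k] = φ_k a.e. for each k, equals E λ_n. -/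
/-!
Lower bound: for admissible `f` let `g_k = (f_1² + ⋯ + f_k²)^{1/2}`, so that
`g_{k+1} = (f_{k+1}² + g_k²)^{1/2}`. Conditional Jensen for the Euclidean norm on `ℝ²` gives
`E[g_{k+1} | F_{k+1}] ≥ (φ_{k+1}² + E[g_k | F_{k+1}]²)^{1/2}`; conditioning on `F_{k+2}` yields
`λ_k ≤ E[g_k | F_{k+1}]` by induction, and integrating gives `E λ_n ≤ E g_n`.

The bound is attained by `f_{k+1} = φ_{k+1} g_k / λ_k`. As long as `E[g_k | F_{k+1}] = λ_k`,
the factor `g_k / λ_k` has conditional expectation `1` given `F_{k+1}`, so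
`E[f_{k+1} | F_{k+1}] = φ_{k+1}`, and `g_{k+1} = (g_k / λ_k) (φ_{k+1}² + λ_k²)^{1/2}`, whence
`E[g_{k+1} | F_{k+2}] = λ_{k+1}`.
-/

open MeasureTheory Filter
open scoped ENNReal

section
variable {Ω : Type*} {m m0 : MeasurableSpace Ω} {μ : Measure Ω}

lemma integrable_complex_mk {u v : Ω → ℝ} (hu : Integrable u μ) (hv : Integrable v μ) :
    Integrable (fun ω => (⟨u ω, v ω⟩ : ℂ)) μ :=
  Complex.equivRealProdCLM.symm.toContinuousLinearMap.integrable_comp (hu.prodMk hv)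

lemma MeasureTheory.Integrable.sqrt_sq_add_sq {u v : Ω → ℝ} (hu : Integrable u μ)
    (hv : Integrable v μ) :
    Integrable (fun ω => √(u ω ^ 2 + v ω ^ 2)) μ := by
  simpa only [Complex.norm_eq_sqrt_sq_add_sq] using (integrable_complex_mk hu hv).norm

-- Conditional Jensen for the norm of the complex-valued `u + i v`.
lemma sqrt_condExp_sq_add_sq_le {u v : Ω → ℝ} (hu : Integrable u μ) (hv : Integrable v μ) :
    (fun ω => √(μ[u|m] ω ^ 2 + μ[v|m] ω ^ 2)) ≤ᵐ[μ] μ[fun ω => √(u ω ^ 2 + v ω ^ 2)|m] := by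
  have hz := integrable_complex_mk hu hv
  filter_upwards [norm_condExp_le (m := m) (μ := μ) (fun ω => (⟨u ω, v ω⟩ : ℂ)),
    Complex.reCLM.comp_condExp_comm hz, Complex.imCLM.comp_condExp_comm hz] with ω hnorm hre him
  change (μ[fun ω => (⟨u ω, v ω⟩ : ℂ)|m] ω).re = μ[u|m] ω at hre
  change (μ[fun ω => (⟨u ω, v ω⟩ : ℂ)|m] ω).im = μ[v|m] ω at him
  simp only [Complex.norm_eq_sqrt_sq_add_sq, hre, him] at hnorm
  exact hnorm

-- Both sides integrate `h` against the trims to `m` of `μ.withDensity μ⁻[X|m]` and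
-- `μ.withDensity X`, which coincide.
lemma lintegral_condLExp_mul (hm : m ≤ m0) [SigmaFinite (μ.trim hm)] {X h : Ω → ℝ≥0∞}
    (hX : AEMeasurable X μ) (hh : Measurable[m] h) :
    ∫⁻ ω, μ⁻[X|m] ω * h ω ∂μ = ∫⁻ ω, X ω * h ω ∂μ := by
  have htrim : (μ.withDensity μ⁻[X|m]).trim hm = (μ.withDensity X).trim hm := by
    refine @Measure.ext _ m _ _ fun s hs => ?_
    rw [trim_measurableSet_eq hm hs, trim_measurableSet_eq hm hs, withDensity_apply _ (hm s hs),
      withDensity_apply _ (hm s hs), setLIntegral_condLExp hm _ _ hs]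
  have hh0 : Measurable h := hh.mono hm le_rfl
  calc ∫⁻ ω, μ⁻[X|m] ω * h ω ∂μ = ∫⁻ ω, h ω ∂(μ.withDensity μ⁻[X|m]).trim hm := by
        rw [lintegral_trim hm hh, lintegral_withDensity_eq_lintegral_mul₀
          (measurable_condLExp' m μ X).aemeasurable hh0.aemeasurable]
        rfl
    _ = ∫⁻ ω, X ω * h ω ∂μ := by
        rw [htrim, lintegral_trim hm hh, lintegral_withDensity_eq_lintegral_mul₀ hX
          hh0.aemeasurable]
        rfl

lemma lintegral_ofReal_condExp_mul (hm : m ≤ m0) [SigmaFinite (μ.trim hm)] {G : Ω → ℝ}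
    (hG : Integrable G μ) (hG0 : 0 ≤ᵐ[μ] G) {h : Ω → ℝ≥0∞} (hh : Measurable[m] h) :
    ∫⁻ ω, ENNReal.ofReal (μ[G|m] ω) * h ω ∂μ = ∫⁻ ω, ENNReal.ofReal (G ω) * h ω ∂μ := by
  rw [← lintegral_condLExp_mul hm hG.1.aemeasurable.ennreal_ofReal hh]
  refine lintegral_congr_ae ?_
  filter_upwards [condLExp_ofReal m hG hG0] with ω hω
  rw [hω]

lemma integrable_mul_of_integrable_mul_condExp (hm : m ≤ m0) [SigmaFinite (μ.trim hm)]
    {f G : Ω → ℝ} (hf : StronglyMeasurable[m] f) (hG : Integrable G μ) (hG0 : 0 ≤ᵐ[μ] G)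
    (hfG : Integrable (f * μ[G|m]) μ) : Integrable (f * G) μ := by
  refine ⟨(hf.mono hm).aestronglyMeasurable.mul hG.1, ?_⟩
  have henorm : ∀ g : Ω → ℝ, 0 ≤ᵐ[μ] g →
      ∫⁻ ω, ‖(f * g) ω‖ₑ ∂μ = ∫⁻ ω, ENNReal.ofReal (g ω) * ‖f ω‖ₑ ∂μ := fun g hg => by
    refine lintegral_congr_ae ?_
    filter_upwards [hg] with ω hω
    rw [Pi.mul_apply, enorm_mul, Real.enorm_eq_ofReal hω, mul_comm]
  calc ∫⁻ ω, ‖(f * G) ω‖ₑ ∂μ = ∫⁻ ω, ENNReal.ofReal (G ω) * ‖f ω‖ₑ ∂μ := henorm G hG0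
    _ = ∫⁻ ω, ENNReal.ofReal (μ[G|m] ω) * ‖f ω‖ₑ ∂μ :=
        (lintegral_ofReal_condExp_mul hm hG hG0 (measurable_enorm.comp hf.measurable)).symm
    _ = ∫⁻ ω, ‖(f * μ[G|m]) ω‖ₑ ∂μ := (henorm _ (condExp_nonneg hG0)).symm
    _ < ∞ := hfG.2

lemma ae_eq_zero_of_condExp_nonpos (hm : m ≤ m0) [SigmaFinite (μ.trim hm)] {G : Ω → ℝ}
    (hG : Integrable G μ) (hG0 : 0 ≤ᵐ[μ] G) : ∀ᵐ ω ∂μ, μ[G|m] ω ≤ 0 → G ω = 0 := by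
  set s := {ω | μ[G|m] ω ≤ 0}
  have hs : MeasurableSet[m] s := measurableSet_le stronglyMeasurable_condExp.measurable
    measurable_const
  have hGs : ∫ ω in s, G ω ∂μ = 0 := by
    refine le_antisymm ?_ (setIntegral_nonneg_of_ae_restrict (ae_restrict_of_ae hG0))
    rw [← setIntegral_condExp hm hG hs]
    exact setIntegral_nonpos (hm s hs) fun ω hω => hω
  have hG_zero : G =ᵐ[μ.restrict s] 0 :=
    (integral_eq_zero_iff_of_nonneg_ae (ae_restrict_of_ae hG0) hG.integrableOn).1 hGs
  exact (ae_restrict_iff' (hm s hs)).1 hG_zero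

-- When `L = μ[G|m]`, `G` vanishes a.e. off `{0 < L}`; the value `1` there keeps
-- `μ[condRatio G L|m] = 1`.
noncomputable def condRatio (G L : Ω → ℝ) (ω : Ω) : ℝ := if 0 < L ω then G ω / L ω else 1

lemma condRatio_nonneg {G L : Ω → ℝ} {ω : Ω} (hG : 0 ≤ G ω) : 0 ≤ condRatio G L ω := by
  unfold condRatio
  split_ifs with hL
  · exact div_nonneg hG hL.le
  · exact zero_le_one

lemma mul_condRatio_eq (ψ G L : Ω → ℝ) :
    ψ * condRatio G L
      = {ω | 0 < L ω}ᶜ.indicator ψ + {ω | 0 < L ω}.indicator (ψ / L) * G := by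
  ext ω
  by_cases hL : 0 < L ω <;> simp [condRatio, hL, mul_div_assoc', div_mul_eq_mul_div]

lemma indicator_div_mul_condExp_ae_eq {G L ψ : Ω → ℝ} (hGL : μ[G|m] =ᵐ[μ] L) :
    {ω | 0 < L ω}.indicator (ψ / L) * μ[G|m] =ᵐ[μ] {ω | 0 < L ω}.indicator ψ := by
  filter_upwards [hGL] with ω hω
  by_cases hLω : 0 < L ω
  · simp [hLω, hω, div_mul_cancel₀ _ hLω.ne']
  · simp [hLω]

lemma integrable_indicator_div_mul (hm : m ≤ m0) [SigmaFinite (μ.trim hm)] {G L ψ : Ω → ℝ}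
    (hG : Integrable G μ) (hG0 : 0 ≤ᵐ[μ] G) (hL : StronglyMeasurable[m] L)
    (hGL : μ[G|m] =ᵐ[μ] L) (hψm : StronglyMeasurable[m] ψ) (hψ : Integrable ψ μ) :
    Integrable ({ω | 0 < L ω}.indicator (ψ / L) * G) μ := by
  have ht : MeasurableSet[m] {ω | 0 < L ω} := measurableSet_lt measurable_const hL.measurable
  refine integrable_mul_of_integrable_mul_condExp hm ((hψm.div hL).indicator ht) hG hG0 ?_
  exact (hψ.indicator (hm _ ht)).congr (indicator_div_mul_condExp_ae_eq hGL).symm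

lemma integrable_mul_condRatio (hm : m ≤ m0) [SigmaFinite (μ.trim hm)] {G L ψ : Ω → ℝ}
    (hG : Integrable G μ) (hG0 : 0 ≤ᵐ[μ] G) (hL : StronglyMeasurable[m] L)
    (hGL : μ[G|m] =ᵐ[μ] L) (hψm : StronglyMeasurable[m] ψ) (hψ : Integrable ψ μ) :
    Integrable (ψ * condRatio G L) μ := by
  have ht : MeasurableSet {ω | 0 < L ω} := hm _ (measurableSet_lt measurable_const hL.measurable)
  rw [mul_condRatio_eq]
  exact (hψ.indicator ht.compl).add (integrable_indicator_div_mul hm hG hG0 hL hGL hψm hψ)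

lemma condExp_mul_condRatio (hm : m ≤ m0) [SigmaFinite (μ.trim hm)] {G L ψ : Ω → ℝ}
    (hG : Integrable G μ) (hG0 : 0 ≤ᵐ[μ] G) (hL : StronglyMeasurable[m] L)
    (hGL : μ[G|m] =ᵐ[μ] L) (hψm : StronglyMeasurable[m] ψ) (hψ : Integrable ψ μ) :
    μ[ψ * condRatio G L|m] =ᵐ[μ] ψ := by
  have ht : MeasurableSet[m] {ω | 0 < L ω} := measurableSet_lt measurable_const hL.measurable
  have hψt : Integrable ({ω | 0 < L ω}ᶜ.indicator ψ) μ := hψ.indicator (hm _ ht.compl)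
  have hBG := integrable_indicator_div_mul hm hG hG0 hL hGL hψm hψ
  rw [mul_condRatio_eq]
  calc μ[{ω | 0 < L ω}ᶜ.indicator ψ + {ω | 0 < L ω}.indicator (ψ / L) * G|m]
      =ᵐ[μ] μ[{ω | 0 < L ω}ᶜ.indicator ψ|m] + μ[{ω | 0 < L ω}.indicator (ψ / L) * G|m] :=
        condExp_add hψt hBG m
    _ = {ω | 0 < L ω}ᶜ.indicator ψ + μ[{ω | 0 < L ω}.indicator (ψ / L) * G|m] := by
        rw [condExp_of_stronglyMeasurable hm (hψm.indicator ht.compl) hψt]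
    _ =ᵐ[μ] {ω | 0 < L ω}ᶜ.indicator ψ + {ω | 0 < L ω}.indicator (ψ / L) * μ[G|m] :=
        EventuallyEq.rfl.add
          (condExp_mul_of_stronglyMeasurable_left ((hψm.div hL).indicator ht) hBG hG)
    _ =ᵐ[μ] {ω | 0 < L ω}ᶜ.indicator ψ + {ω | 0 < L ω}.indicator ψ :=
        EventuallyEq.rfl.add (indicator_div_mul_condExp_ae_eq hGL)
    _ = ψ := by rw [add_comm, Set.indicator_self_add_compl]

lemma ae_eq_condRatio_mul (hm : m ≤ m0) [SigmaFinite (μ.trim hm)] {G L : Ω → ℝ}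
    (hG : Integrable G μ) (hG0 : 0 ≤ᵐ[μ] G) (hGL : μ[G|m] =ᵐ[μ] L) :
    G =ᵐ[μ] condRatio G L * L := by
  filter_upwards [ae_eq_zero_of_condExp_nonpos hm hG hG0, hGL, condExp_nonneg hG0 (m := m)]
    with ω hzero hGLω hL0
  rw [hGLω] at hzero hL0
  by_cases hLω : 0 < L ω
  · simp [condRatio, hLω, div_mul_cancel₀ _ hLω.ne']
  · have hL : L ω = 0 := le_antisymm (not_lt.1 hLω) hL0
    simp [condRatio, hL, hzero hL.le]

lemma condExp_sqrt_sq_add_sq_le [IsFiniteMeasure μ] {m₁ m₂ : MeasurableSpace Ω}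
    (hm₂₁ : m₂ ≤ m₁) (hm₁ : m₁ ≤ m0) {f g φ L : Ω → ℝ} (hf : Integrable f μ)
    (hg : Integrable g μ) (hL : Integrable L μ) (hfφ : μ[f|m₁] =ᵐ[μ] φ) (hL0 : 0 ≤ᵐ[μ] L)
    (hLg : L ≤ᵐ[μ] μ[g|m₁]) :
    μ[fun ω => √(φ ω ^ 2 + L ω ^ 2)|m₂] ≤ᵐ[μ] μ[fun ω => √(f ω ^ 2 + g ω ^ 2)|m₂] := by
  have hφ : Integrable φ μ := integrable_condExp.congr hfφ
  have hpt : (fun ω => √(φ ω ^ 2 + L ω ^ 2)) ≤ᵐ[μ] μ[fun ω => √(f ω ^ 2 + g ω ^ 2)|m₁] := by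
    filter_upwards [sqrt_condExp_sq_add_sq_le (m := m₁) hf hg, hfφ, hL0, hLg]
      with ω hJensen hφω hL0ω hLgω
    refine le_trans (Real.sqrt_le_sqrt ?_) hJensen
    rw [hφω]
    gcongr
  exact (condExp_mono (hφ.sqrt_sq_add_sq hL) integrable_condExp hpt).trans_eq
    (condExp_condExp_of_le hm₂₁ hm₁)

lemma condExp_sqrt_sq_mul_condRatio_add_sq [IsFiniteMeasure μ] {m₁ m₂ : MeasurableSpace Ω}
    (hm₂₁ : m₂ ≤ m₁) (hm₁ : m₁ ≤ m0) {G L φ : Ω → ℝ} (hG : Integrable G μ) (hG0 : 0 ≤ᵐ[μ] G)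
    (hL : StronglyMeasurable[m₁] L) (hGL : μ[G|m₁] =ᵐ[μ] L) (hφm : StronglyMeasurable[m₁] φ)
    (hφ : Integrable φ μ) :
    Integrable (fun ω => √((φ ω * condRatio G L ω) ^ 2 + G ω ^ 2)) μ ∧
      μ[fun ω => √((φ ω * condRatio G L ω) ^ 2 + G ω ^ 2)|m₂]
        =ᵐ[μ] μ[fun ω => √(φ ω ^ 2 + L ω ^ 2)|m₂] := by
  set ψ : Ω → ℝ := fun ω => √(φ ω ^ 2 + L ω ^ 2)
  have hψm : StronglyMeasurable[m₁] ψ :=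
    ((hφm.measurable.pow_const 2).add (hL.measurable.pow_const 2)).sqrt.stronglyMeasurable
  have hψ : Integrable ψ μ := hφ.sqrt_sq_add_sq (integrable_condExp.congr hGL)
  have hfactor : (fun ω => √((φ ω * condRatio G L ω) ^ 2 + G ω ^ 2)) =ᵐ[μ] ψ * condRatio G L := by
    filter_upwards [ae_eq_condRatio_mul hm₁ hG hG0 hGL, hG0] with ω hGω hG0ω
    have hc := condRatio_nonneg (L := L) hG0ω
    have hsq : (φ ω * condRatio G L ω) ^ 2 + (condRatio G L ω * L ω) ^ 2
        = condRatio G L ω ^ 2 * (φ ω ^ 2 + L ω ^ 2) := by ring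
    rw [hGω, Pi.mul_apply, Pi.mul_apply, hsq, Real.sqrt_mul (sq_nonneg _), Real.sqrt_sq hc,
      mul_comm]
  refine ⟨(integrable_mul_condRatio hm₁ hG hG0 hL hGL hψm hψ).congr hfactor.symm, ?_⟩
  calc μ[fun ω => √((φ ω * condRatio G L ω) ^ 2 + G ω ^ 2)|m₂]
      =ᵐ[μ] μ[ψ * condRatio G L|m₂] := condExp_congr_ae hfactor
    _ =ᵐ[μ] μ[μ[ψ * condRatio G L|m₁]|m₂] := (condExp_condExp_of_le hm₂₁ hm₁).symm
    _ =ᵐ[μ] μ[ψ|m₂] := condExp_congr_ae (condExp_mul_condRatio hm₁ hG hG0 hL hGL hψm hψ)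

end

section
variable {Ω : Type*}

noncomputable def partialNorm (f : ℕ → Ω → ℝ) (k : ℕ) (ω : Ω) : ℝ :=
  √(∑ j ∈ Finset.Icc 1 k, f j ω ^ 2)

@[simp]
lemma partialNorm_zero (f : ℕ → Ω → ℝ) : partialNorm f 0 = 0 := by
  ext ω
  simp [partialNorm]

lemma partialNorm_succ (f : ℕ → Ω → ℝ) (k : ℕ) :
    partialNorm f (k + 1) = fun ω => √(f (k + 1) ω ^ 2 + partialNorm f k ω ^ 2) := by
  ext ω
  rw [partialNorm, partialNorm, Real.sq_sqrt (Finset.sum_nonneg fun _ _ => sq_nonneg _),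
    Finset.sum_Icc_succ_top (Nat.le_add_left 1 k), add_comm]

lemma integrable_partialNorm [MeasurableSpace Ω] {μ : Measure Ω} {f : ℕ → Ω → ℝ} {n : ℕ}
    (hf : ∀ k, 1 ≤ k → k ≤ n → Integrable (f k) μ) : ∀ k ≤ n, Integrable (partialNorm f k) μ := by
  intro k hk
  induction k with
  | zero => simp
  | succ k ih =>
    rw [partialNorm_succ]
    exact (hf (k + 1) (Nat.le_add_left 1 k) hk).sqrt_sq_add_sq (ih (Nat.le_of_succ_le hk))

noncomputable def optimalNorm (φ lam : ℕ → Ω → ℝ) : ℕ → Ω → ℝ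
  | 0 => 0
  | k + 1 => fun ω =>
    √((φ (k + 1) ω * condRatio (optimalNorm φ lam k) (lam k) ω) ^ 2 + optimalNorm φ lam k ω ^ 2)

noncomputable def optimal (φ lam : ℕ → Ω → ℝ) (k : ℕ) : Ω → ℝ :=
  φ k * condRatio (optimalNorm φ lam (k - 1)) (lam (k - 1))

lemma optimalNorm_nonneg (φ lam : ℕ → Ω → ℝ) (k : ℕ) (ω : Ω) : 0 ≤ optimalNorm φ lam k ω := by
  cases k
  · exact le_rfl
  · exact Real.sqrt_nonneg _

lemma partialNorm_optimal (φ lam : ℕ → Ω → ℝ) (k : ℕ) :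
    partialNorm (optimal φ lam) k = optimalNorm φ lam k := by
  induction k with
  | zero => simp [optimalNorm]
  | succ k ih =>
    rw [partialNorm_succ, ih]
    rfl

end

section
variable {Ω : Type*} [m0 : MeasurableSpace Ω] {μ : Measure Ω} {n : ℕ}
  {F : ℕ → MeasurableSpace Ω} {φ lam : ℕ → Ω → ℝ}

lemma lam_stronglyMeasurable_integrable_nonneg (hlam0 : lam 0 = fun _ => 0)
    (hlam : ∀ k, 1 ≤ k → k ≤ n →
      lam k = μ[(fun ω => √(φ k ω ^ 2 + lam (k - 1) ω ^ 2)) | F (k + 1)]) :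
    ∀ k ≤ n, StronglyMeasurable[F (k + 1)] (lam k) ∧ Integrable (lam k) μ ∧ 0 ≤ᵐ[μ] lam k := by
  intro k hk
  rcases Nat.eq_zero_or_pos k with rfl | hk1
  · rw [hlam0]
    exact ⟨stronglyMeasurable_const, integrable_zero _ _ _, EventuallyLE.rfl⟩
  · rw [hlam k hk1 hk]
    exact ⟨stronglyMeasurable_condExp, integrable_condExp,
      condExp_nonneg (ae_of_all _ fun _ => Real.sqrt_nonneg _)⟩

variable [IsFiniteMeasure μ]

lemma lam_le_condExp_partialNorm (hFle : ∀ k, F k ≤ m0)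
    (hFdec : ∀ k, 1 ≤ k → k ≤ n → F (k + 1) ≤ F k) (hlam0 : lam 0 = fun _ => 0)
    (hlam : ∀ k, 1 ≤ k → k ≤ n →
      lam k = μ[(fun ω => √(φ k ω ^ 2 + lam (k - 1) ω ^ 2)) | F (k + 1)])
    {f : ℕ → Ω → ℝ} (hf : ∀ k, 1 ≤ k → k ≤ n → Integrable (f k) μ ∧ μ[f k | F k] =ᵐ[μ] φ k) :
    ∀ k ≤ n, lam k ≤ᵐ[μ] μ[partialNorm f k | F (k + 1)] := by
  intro k hk
  induction k with
  | zero =>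
    simp only [hlam0, partialNorm_zero, condExp_zero]
    exact EventuallyLE.rfl
  | succ k ih =>
    have hk' := Nat.le_of_succ_le hk
    obtain ⟨-, hlam_int, hlam_nonneg⟩ := lam_stronglyMeasurable_integrable_nonneg hlam0 hlam k hk'
    obtain ⟨hf_int, hf_condExp⟩ := hf (k + 1) (Nat.le_add_left 1 k) hk
    rw [hlam (k + 1) (Nat.le_add_left 1 k) hk, Nat.add_sub_cancel, partialNorm_succ]
    exact condExp_sqrt_sq_add_sq_le (hFdec (k + 1) (Nat.le_add_left 1 k) hk) (hFle (k + 1)) hf_int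
      (integrable_partialNorm (fun j hj1 hjn => (hf j hj1 hjn).1) k hk') hlam_int hf_condExp
      hlam_nonneg (ih hk')

lemma integral_lam_le_integral_partialNorm (hFle : ∀ k, F k ≤ m0)
    (hFdec : ∀ k, 1 ≤ k → k ≤ n → F (k + 1) ≤ F k) (hlam0 : lam 0 = fun _ => 0)
    (hlam : ∀ k, 1 ≤ k → k ≤ n →
      lam k = μ[(fun ω => √(φ k ω ^ 2 + lam (k - 1) ω ^ 2)) | F (k + 1)])
    {f : ℕ → Ω → ℝ} (hf : ∀ k, 1 ≤ k → k ≤ n → Integrable (f k) μ ∧ μ[f k | F k] =ᵐ[μ] φ k) :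
    ∫ ω, lam n ω ∂μ ≤ ∫ ω, partialNorm f n ω ∂μ :=
  calc ∫ ω, lam n ω ∂μ ≤ ∫ ω, μ[partialNorm f n | F (n + 1)] ω ∂μ :=
        integral_mono_ae (lam_stronglyMeasurable_integrable_nonneg hlam0 hlam n le_rfl).2.1
          integrable_condExp (lam_le_condExp_partialNorm hFle hFdec hlam0 hlam hf n le_rfl)
    _ = ∫ ω, partialNorm f n ω ∂μ := integral_condExp (hFle (n + 1))

lemma optimalNorm_spec (hFle : ∀ k, F k ≤ m0) (hFdec : ∀ k, 1 ≤ k → k ≤ n → F (k + 1) ≤ F k)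
    (hφint : ∀ k, 1 ≤ k → k ≤ n → Integrable (φ k) μ)
    (hφmeas : ∀ k, 1 ≤ k → k ≤ n → Measurable[F k] (φ k)) (hlam0 : lam 0 = fun _ => 0)
    (hlam : ∀ k, 1 ≤ k → k ≤ n →
      lam k = μ[(fun ω => √(φ k ω ^ 2 + lam (k - 1) ω ^ 2)) | F (k + 1)]) :
    ∀ k ≤ n, Integrable (optimalNorm φ lam k) μ ∧
      μ[optimalNorm φ lam k | F (k + 1)] =ᵐ[μ] lam k := by
  intro k hk
  induction k with
  | zero =>
    simp only [optimalNorm, hlam0, condExp_zero]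
    exact ⟨integrable_zero _ _ _, EventuallyEq.rfl⟩
  | succ k ih =>
    have hk' := Nat.le_of_succ_le hk
    obtain ⟨hG_int, hG_condExp⟩ := ih hk'
    rw [hlam (k + 1) (Nat.le_add_left 1 k) hk, Nat.add_sub_cancel]
    exact condExp_sqrt_sq_mul_condRatio_add_sq (hFdec (k + 1) (Nat.le_add_left 1 k) hk)
      (hFle (k + 1)) hG_int (ae_of_all _ (optimalNorm_nonneg φ lam k))
      (lam_stronglyMeasurable_integrable_nonneg hlam0 hlam k hk').1 hG_condExp
      (hφmeas (k + 1) (Nat.le_add_left 1 k) hk).stronglyMeasurable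
      (hφint (k + 1) (Nat.le_add_left 1 k) hk)

lemma optimal_spec (hFle : ∀ k, F k ≤ m0) (hFdec : ∀ k, 1 ≤ k → k ≤ n → F (k + 1) ≤ F k)
    (hφint : ∀ k, 1 ≤ k → k ≤ n → Integrable (φ k) μ)
    (hφmeas : ∀ k, 1 ≤ k → k ≤ n → Measurable[F k] (φ k)) (hlam0 : lam 0 = fun _ => 0)
    (hlam : ∀ k, 1 ≤ k → k ≤ n →
      lam k = μ[(fun ω => √(φ k ω ^ 2 + lam (k - 1) ω ^ 2)) | F (k + 1)]) :
    ∀ k, 1 ≤ k → k ≤ n → Integrable (optimal φ lam k) μ ∧ μ[optimal φ lam k | F k] =ᵐ[μ] φ k := by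
  intro k hk1 hk
  obtain ⟨j, rfl⟩ := Nat.exists_eq_add_of_le' hk1
  obtain ⟨hG_int, hG_condExp⟩ :=
    optimalNorm_spec hFle hFdec hφint hφmeas hlam0 hlam j (Nat.le_of_succ_le hk)
  have hL := (lam_stronglyMeasurable_integrable_nonneg hlam0 hlam j (Nat.le_of_succ_le hk)).1
  have hG0 := ae_of_all μ (optimalNorm_nonneg φ lam j)
  have hφm := (hφmeas (j + 1) hk1 hk).stronglyMeasurable
  exact ⟨integrable_mul_condRatio (hFle (j + 1)) hG_int hG0 hL hG_condExp hφm (hφint _ hk1 hk),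
    condExp_mul_condRatio (hFle (j + 1)) hG_int hG0 hL hG_condExp hφm (hφint _ hk1 hk)⟩

lemma integral_partialNorm_optimal (hFle : ∀ k, F k ≤ m0)
    (hFdec : ∀ k, 1 ≤ k → k ≤ n → F (k + 1) ≤ F k)
    (hφint : ∀ k, 1 ≤ k → k ≤ n → Integrable (φ k) μ)
    (hφmeas : ∀ k, 1 ≤ k → k ≤ n → Measurable[F k] (φ k)) (hlam0 : lam 0 = fun _ => 0)
    (hlam : ∀ k, 1 ≤ k → k ≤ n →
      lam k = μ[(fun ω => √(φ k ω ^ 2 + lam (k - 1) ω ^ 2)) | F (k + 1)]) :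
    ∫ ω, partialNorm (optimal φ lam) n ω ∂μ = ∫ ω, lam n ω ∂μ := by
  rw [partialNorm_optimal, ← integral_condExp (hFle (n + 1))]
  exact integral_congr_ae (optimalNorm_spec hFle hFdec hφint hφmeas hlam0 hlam n le_rfl).2

end

/-- the exact infimum in the Stein-type inequality (Lemma `inf`). -/
theorem stmt5 {Ω : Type*} [m0 : MeasurableSpace Ω] (μ : Measure Ω) [IsProbabilityMeasure μ]
    (n : ℕ) (F : ℕ → MeasurableSpace Ω)
    (hFle : ∀ k, F k ≤ m0)
    (hFdec : ∀ k, 1 ≤ k → k ≤ n → F (k + 1) ≤ F k)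
    (φ : ℕ → Ω → ℝ)
    (hφint : ∀ k, 1 ≤ k → k ≤ n → Integrable (φ k) μ)
    (hφmeas : ∀ k, 1 ≤ k → k ≤ n → Measurable[F k] (φ k))
    (lam : ℕ → Ω → ℝ)
    (hlam0 : lam 0 = fun _ => 0)
    (hlam : ∀ k, 1 ≤ k → k ≤ n →
      lam k = μ[(fun ω => Real.sqrt ((φ k ω) ^ 2 + (lam (k - 1) ω) ^ 2)) | F (k + 1)]) :
    sInf {r : ℝ | ∃ f : ℕ → Ω → ℝ,
        (∀ k, 1 ≤ k → k ≤ n → Integrable (f k) μ ∧ μ[f k | F k] =ᵐ[μ] φ k) ∧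
        r = ∫ ω, Real.sqrt (∑ k ∈ Finset.Icc 1 n, (f k ω) ^ 2) ∂μ}
      = ∫ ω, lam n ω ∂μ := by
  refine IsLeast.csInf_eq ⟨⟨optimal φ lam, optimal_spec hFle hFdec hφint hφmeas hlam0 hlam,
    (integral_partialNorm_optimal hFle hFdec hφint hφmeas hlam0 hlam).symm⟩, ?_⟩
  rintro r ⟨f, hf, rfl⟩
  exact integral_lam_le_integral_partialNorm hFle hFdec hlam0 hlam hf
end

section
/- Let φ_1,…,φ_n be nonnegative integrable random variables on a probability space (Ω,μ), and define real numbers λ_0 = 0 and λ_k = E (φ_k² + λ_{k−1}²)^{1/2} for k = 1,…,n. Then both ‖(φ_k)_{k=1}^n‖_{L¹(ℓ²)} ≤ 2 λ_n and ‖(φ_k)_{k=1}^n‖_{ind} ≤ 2 λ_n. -/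
/-! With `S_m = ∑_{j<m} φ_j²`, induction on `m` gives `E √(S_m + t²) ≤ λ_m + t` for every
`t ≥ λ_m`. In the step, since `s ↦ √(A + s²) - s` is decreasing on `[0, ∞)`, adding `φ_m²` to
`t²` under the root costs at most `√(φ_m² + t²) - t` pointwise, and by the same monotonicity
the expectation of this is at most `λ_{m+1} - λ_m` because `t ≥ λ_m`. Taking `m = n` and
`t = λ_n` gives `2 λ_n`. For the independent-sum norm apply this on the product space to the
functions `ω ↦ φ_k (ω_k)`, which have the same laws as the `φ_k`. -/

open MeasureTheory Finset

theorem Real.sqrt_add_sq_sub_antitoneOn {A : ℝ} (hA : 0 ≤ A) :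
    AntitoneOn (fun t => √(A + t ^ 2) - t) (Set.Ici 0) := by
  intro u (hu : 0 ≤ u) t _ hut
  have hu_le : u ≤ √(A + u ^ 2) := Real.le_sqrt_of_sq_le (by linarith)
  have hsq : √(A + u ^ 2) ^ 2 = A + u ^ 2 := Real.sq_sqrt (by positivity)
  have : √(A + t ^ 2) ≤ √(A + u ^ 2) + (t - u) := by
    rw [Real.sqrt_le_left (by linarith)]
    nlinarith
  simp only
  linarith

theorem Real.sqrt_add_sq_add_sq_le {A t : ℝ} (hA : 0 ≤ A) (ht : 0 ≤ t) (a : ℝ) :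
    √(A + a ^ 2 + t ^ 2) ≤ √(A + t ^ 2) + (√(a ^ 2 + t ^ 2) - t) := by
  have hT : t ≤ √(a ^ 2 + t ^ 2) := Real.le_sqrt_of_sq_le (by nlinarith)
  have := Real.sqrt_add_sq_sub_antitoneOn hA ht (ht.trans hT) hT
  simp only [Real.sq_sqrt (by positivity : 0 ≤ a ^ 2 + t ^ 2)] at this
  rw [add_assoc]
  linarith

section

variable {X : Type*} [MeasurableSpace X] {ν : Measure X}

theorem integrable_sqrt_sum_sq_add_sq [IsFiniteMeasure ν] {ι : Type*} {s : Finset ι}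
    {f : ι → X → ℝ} (hf : ∀ j ∈ s, Integrable (f j) ν) (c : ℝ) :
    Integrable (fun x => √(∑ j ∈ s, f j x ^ 2 + c ^ 2)) ν := by
  have hmeas := fun j hj => (hf j hj).aestronglyMeasurable
  refine ((integrable_finsetSum s fun j hj => (hf j hj).abs).add
    (integrable_const |c|)).mono' (by fun_prop) (ae_of_all _ fun x => ?_)
  have hsq : ∑ j ∈ s, f j x ^ 2 ≤ (∑ j ∈ s, |f j x|) ^ 2 := by
    simpa only [sq_abs] using
      Finset.sum_sq_le_sq_sum_of_nonneg (f := fun j => |f j x|) fun j _ => abs_nonneg _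
  have hsum : 0 ≤ ∑ j ∈ s, |f j x| := Finset.sum_nonneg fun j _ => abs_nonneg _
  simp only [Pi.add_apply]
  rw [Real.norm_of_nonneg (Real.sqrt_nonneg _), Real.sqrt_le_left (by positivity)]
  nlinarith [sq_abs c, abs_nonneg c]

theorem integrable_sqrt_sq_add_sq [IsFiniteMeasure ν] {f : X → ℝ} (hf : Integrable f ν)
    (c : ℝ) : Integrable (fun x => √(f x ^ 2 + c ^ 2)) ν := by
  simpa using integrable_sqrt_sum_sq_add_sq (s := {()}) (fun _ _ => hf) c

variable [IsProbabilityMeasure ν]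

theorem abs_le_integral_sqrt_sq_add_sq {f : X → ℝ} (hf : Integrable f ν) (c : ℝ) :
    |c| ≤ ∫ x, √(f x ^ 2 + c ^ 2) ∂ν := by
  calc |c| = ∫ _, |c| ∂ν := by simp
    _ ≤ ∫ x, √(f x ^ 2 + c ^ 2) ∂ν :=
      integral_mono (integrable_const _) (integrable_sqrt_sq_add_sq hf c) fun x => by
        rw [← Real.sqrt_sq_eq_abs]
        exact Real.sqrt_le_sqrt (by nlinarith)

theorem integral_sqrt_sq_add_sq_sub_antitoneOn {f : X → ℝ} (hf : Integrable f ν) :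
    AntitoneOn (fun t => ∫ x, √(f x ^ 2 + t ^ 2) ∂ν - t) (Set.Ici 0) := by
  intro u hu t ht hut
  have hpt : ∀ x, √(f x ^ 2 + t ^ 2) ≤ √(f x ^ 2 + u ^ 2) + (t - u) := fun x => by
    linarith [Real.sqrt_add_sq_sub_antitoneOn (sq_nonneg (f x)) hu ht hut]
  have hint := integrable_sqrt_sq_add_sq hf
  have : ∫ x, √(f x ^ 2 + t ^ 2) ∂ν ≤ ∫ x, √(f x ^ 2 + u ^ 2) ∂ν + (t - u) :=
    calc ∫ x, √(f x ^ 2 + t ^ 2) ∂ν ≤ ∫ x, (√(f x ^ 2 + u ^ 2) + (t - u)) ∂ν :=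
          integral_mono (hint t) ((hint u).add (integrable_const _)) hpt
      _ = ∫ x, √(f x ^ 2 + u ^ 2) ∂ν + (t - u) := by
          simp [integral_add (hint u) (integrable_const _)]
  simp only
  linarith

theorem integral_sqrt_sum_range_sq_add_sq_le {ψ : ℕ → X → ℝ} {lam : ℕ → ℝ} {m : ℕ}
    (hψ : ∀ k < m, Integrable (ψ k) ν) (hlam0 : lam 0 = 0)
    (hlam : ∀ k < m, ∫ x, √(ψ k x ^ 2 + lam k ^ 2) ∂ν ≤ lam (k + 1)) {t : ℝ} (ht : lam m ≤ t) :
    ∫ x, √(∑ j ∈ range m, ψ j x ^ 2 + t ^ 2) ∂ν ≤ lam m + t := by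
  induction m generalizing t with
  | zero => simp [hlam0, Real.sqrt_sq (hlam0 ▸ ht)]
  | succ m ih =>
    have hlam_le : ∀ k < m + 1, |lam k| ≤ lam (k + 1) := fun k hk =>
      (abs_le_integral_sqrt_sq_add_sq (hψ k hk) _).trans (hlam k hk)
    have hψm := hψ m m.lt_succ_self
    have hm : lam m ≤ t := (le_abs_self _).trans ((hlam_le m m.lt_succ_self).trans ht)
    have hm0 : 0 ≤ lam m := by
      cases m with
      | zero => exact hlam0.ge
      | succ k => exact (abs_nonneg _).trans (hlam_le k (by omega))
    have ht0 : 0 ≤ t := hm0.trans hm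
    have hS := integrable_sqrt_sum_sq_add_sq
      (fun j hj => hψ j (Nat.lt_succ_of_lt (mem_range.mp hj))) t
    have hT := integrable_sqrt_sq_add_sq hψm t
    have hTt : Integrable (fun x => √(ψ m x ^ 2 + t ^ 2) - t) ν := hT.sub (integrable_const t)
    calc ∫ x, √(∑ j ∈ range (m + 1), ψ j x ^ 2 + t ^ 2) ∂ν
        ≤ ∫ x, (√(∑ j ∈ range m, ψ j x ^ 2 + t ^ 2) + (√(ψ m x ^ 2 + t ^ 2) - t)) ∂ν := by
          refine integral_mono
            (integrable_sqrt_sum_sq_add_sq (fun j hj => hψ j (mem_range.mp hj)) t)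
            (hS.add hTt) fun x => ?_
          simpa only [sum_range_succ] using
            Real.sqrt_add_sq_add_sq_le (sum_nonneg fun j _ => sq_nonneg (ψ j x)) ht0 (ψ m x)
      _ = ∫ x, √(∑ j ∈ range m, ψ j x ^ 2 + t ^ 2) ∂ν + (∫ x, √(ψ m x ^ 2 + t ^ 2) ∂ν - t) := by
          rw [integral_add hS hTt, integral_sub hT (integrable_const t)]
          simp
      _ ≤ (lam m + t) + (∫ x, √(ψ m x ^ 2 + lam m ^ 2) ∂ν - lam m) := by
          gcongr ?_ + ?_
          · exact ih (fun k hk => hψ k (by omega)) (fun k hk => hlam k (by omega)) hm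
          · exact integral_sqrt_sq_add_sq_sub_antitoneOn hψm hm0 ht0 hm
      _ ≤ lam (m + 1) + t := by linarith [hlam m m.lt_succ_self]

theorem integral_sqrt_sum_sq_le_two_mul {n : ℕ} {φ : Fin n → X → ℝ}
    (hφ : ∀ k, Integrable (φ k) ν) {lam : ℕ → ℝ} (hlam0 : lam 0 = 0)
    (hlam : ∀ k : Fin n, ∫ x, √(φ k x ^ 2 + lam k ^ 2) ∂ν ≤ lam (k + 1)) :
    ∫ x, √(∑ k, φ k x ^ 2) ∂ν ≤ 2 * lam n := by
  let ψ : ℕ → X → ℝ := fun k => if h : k < n then φ ⟨k, h⟩ else 0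
  have hψ : ∀ k (h : k < n), ψ k = φ ⟨k, h⟩ := fun k h => dif_pos h
  have hsum : ∀ x, ∑ k, φ k x ^ 2 = ∑ k ∈ range n, ψ k x ^ 2 := fun x => by
    rw [← Fin.sum_univ_eq_sum_range (fun k => ψ k x ^ 2)]
    simp [hψ]
  have key := integral_sqrt_sum_range_sq_add_sq_le (ν := ν) (ψ := ψ) (m := n)
    (fun k hk => hψ k hk ▸ hφ _) hlam0 (fun k hk => hψ k hk ▸ hlam ⟨k, hk⟩) le_rfl
  calc ∫ x, √(∑ k, φ k x ^ 2) ∂ν ≤ ∫ x, √(∑ k ∈ range n, ψ k x ^ 2 + lam n ^ 2) ∂ν := by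
        refine integral_mono_of_nonneg (ae_of_all _ fun x => Real.sqrt_nonneg _)
          (integrable_sqrt_sum_sq_add_sq (fun k hk => ?_) _) (ae_of_all _ fun x => ?_)
        · exact hψ k (mem_range.mp hk) ▸ hφ _
        · simp only [hsum]
          exact Real.sqrt_le_sqrt (le_add_of_nonneg_right (sq_nonneg _))
    _ ≤ 2 * lam n := by linarith

end

theorem integral_comp_eval_pi {Ω : Type*} [MeasurableSpace Ω] {μ : Measure Ω}
    [IsProbabilityMeasure μ] {n : ℕ} (k : Fin n) {f : Ω → ℝ} (hf : AEStronglyMeasurable f μ) :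
    ∫ ω : Fin n → Ω, f (ω k) ∂(Measure.pi fun _ => μ) = ∫ x, f x ∂μ := by
  have h := measurePreserving_eval (fun _ : Fin n => μ) k
  rw [← h.map_eq] at hf
  rw [← integral_map h.measurable.aemeasurable hf, h.map_eq]

theorem stmt7_general {Ω : Type*} [MeasurableSpace Ω] (μ : Measure Ω) [IsProbabilityMeasure μ]
    (n : ℕ) (φ : Fin n → Ω → ℝ)
    (hφint : ∀ k, Integrable (φ k) μ)
    (lam : ℕ → ℝ) (hlam0 : lam 0 = 0)
    (hlam : ∀ k : Fin n,
      lam ((k : ℕ) + 1) = ∫ ω, Real.sqrt ((φ k ω) ^ 2 + (lam (k : ℕ)) ^ 2) ∂μ) :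
    (∫ ω, Real.sqrt (∑ k, (φ k ω) ^ 2) ∂μ) ≤ 2 * lam n ∧
    (∫ ω : Fin n → Ω, Real.sqrt (∑ k, (φ k (ω k)) ^ 2) ∂(Measure.pi fun _ => μ))
      ≤ 2 * lam n := by
  refine ⟨integral_sqrt_sum_sq_le_two_mul hφint hlam0 fun k => (hlam k).ge,
    integral_sqrt_sum_sq_le_two_mul (fun k => ?_) hlam0 fun k => ?_⟩
  · exact (measurePreserving_eval _ k).integrable_comp_of_integrable (hφint k)
  · rw [integral_comp_eval_pi k (integrable_sqrt_sq_add_sq (hφint k) _).aestronglyMeasurable]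
    exact (hlam k).ge

/-- the non-linear telescoping lemma, part (i). -/
theorem stmt7 {Ω : Type*} [MeasurableSpace Ω] (μ : Measure Ω) [IsProbabilityMeasure μ]
    (n : ℕ) (φ : Fin n → Ω → ℝ)
    (hφnonneg : ∀ k, ∀ ω, 0 ≤ φ k ω)
    (hφint : ∀ k, Integrable (φ k) μ)
    (lam : ℕ → ℝ) (hlam0 : lam 0 = 0)
    (hlam : ∀ k : Fin n,
      lam ((k : ℕ) + 1) = ∫ ω, Real.sqrt ((φ k ω) ^ 2 + (lam (k : ℕ)) ^ 2) ∂μ) :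
    (∫ ω, Real.sqrt (∑ k, (φ k ω) ^ 2) ∂μ) ≤ 2 * lam n ∧
    (∫ ω : Fin n → Ω, Real.sqrt (∑ k, (φ k (ω k)) ^ 2) ∂(Measure.pi fun _ => μ))
      ≤ 2 * lam n :=
  stmt7_general μ n φ hφint lam hlam0 hlam
end

section
/- Let φ_1,…,φ_n be nonnegative integrable random variables and λ_1,…,λ_n nonnegative bounded random variables on a probability space (Ω,μ), with λ_0 := 0, such that E λ_k ≥ E (φ_k² + λ_{k−1}²)^{1/2} for each k = 1,…,n. Then max( ‖(φ_k)_{k=1}^n‖_{L¹(ℓ²)}, ‖(φ_k)_{k=1}^n‖_{ind} ) ≤ (1+√2) · (E λ_n)^{1/2} · (max_{1≤k≤n} ess sup λ_k)^{1/2}. -/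
/-!
Put `d_k := √(φ_k² + λ_k²) - λ_k ≥ 0`. The hypothesis makes `∑ E d_k` telescope to at most
`L := E λ_n`, and `φ_k² = d_k² + 2 d_k λ_k ≤ d_k² + 2 M d_k` with `M` the largest essential
supremum. Hence `∑ φ_k² ≤ G² + 2 M G` for `G := ∑ d_k`, i.e. `√(∑ φ_k²) ≤ G + √(2M) √G`, and
Jensen for the square root gives `E √(∑ φ_k²) ≤ L + √(2M) √L ≤ (1 + √2) √L √M`. Since only the
laws of the individual `d_k` enter, the same bound holds when the `φ_k` are evaluated at
independent copies of `ω`.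
-/

open MeasureTheory Real

lemma le_sqrt_sq_add_sq (a b : ℝ) : b ≤ √(a ^ 2 + b ^ 2) :=
  (le_abs_self b).trans (abs_le_sqrt (by nlinarith [sq_nonneg a]))

lemma sqrt_sq_add_sq_le_abs_add_abs (a b : ℝ) : √(a ^ 2 + b ^ 2) ≤ |a| + |b| :=
  sqrt_le_iff.2 ⟨by positivity, by nlinarith [sq_abs a, sq_abs b, abs_nonneg a, abs_nonneg b]⟩

lemma sq_le_sqrt_sq_add_sq_sub {a b M : ℝ} (hbM : b ≤ M) :
    a ^ 2 ≤ (√(a ^ 2 + b ^ 2) - b) ^ 2 + 2 * M * (√(a ^ 2 + b ^ 2) - b) := by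
  have hd : 0 ≤ √(a ^ 2 + b ^ 2) - b := sub_nonneg.2 (le_sqrt_sq_add_sq a b)
  have hsq : √(a ^ 2 + b ^ 2) ^ 2 = a ^ 2 + b ^ 2 := sq_sqrt (by positivity)
  nlinarith [mul_le_mul_of_nonneg_left hbM hd]

lemma le_add_mul_sqrt_of_sq_le {x y c : ℝ} (hx : 0 ≤ x) (hc : 0 ≤ c)
    (h : y ^ 2 ≤ x ^ 2 + c ^ 2 * x) : y ≤ x + c * √x := by
  refine le_of_sq_le_sq (h.trans ?_) (by positivity)
  have hsq : √x ^ 2 = x := sq_sqrt hx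
  nlinarith [mul_nonneg (mul_nonneg hc hx) (sqrt_nonneg x)]

lemma add_sqrt_two_mul_mul_sqrt_le {L M : ℝ} (hL : 0 ≤ L) (hLM : L ≤ M) :
    L + √(2 * M) * √L ≤ (1 + √2) * √L * √M := by
  have hLL : L = √L * √L := (mul_self_sqrt hL).symm
  have hLM' : √L ≤ √M := sqrt_le_sqrt hLM
  rw [sqrt_mul zero_le_two]
  nlinarith [mul_le_mul_of_nonneg_left hLM' (sqrt_nonneg L), sqrt_nonneg 2, sqrt_nonneg M]

lemma Finset.le_ciSup_of_mem {ι : Type*} {s : Finset ι} (f : ι → ℝ) {i : ι} (hi : i ∈ s) :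
    f i ≤ ⨆ j ∈ s, f j := by
  have hbdd : BddAbove (Set.range fun j => ⨆ _ : j ∈ s, f j) := by
    refine ⟨∑ j ∈ s, |f j|, ?_⟩
    rintro _ ⟨j, rfl⟩
    exact Real.iSup_le (fun hj => (le_abs_self _).trans
      (single_le_sum (f := fun j => |f j|) (fun _ _ => abs_nonneg _) hj))
      (sum_nonneg fun _ _ => abs_nonneg _)
  exact le_ciSup_of_le hbdd i (ciSup_pos (f := fun _ => f i) hi).ge

lemma Fin.sum_le_sub_of_le_sub {n : ℕ} {b : Fin n → ℝ} {a : ℕ → ℝ}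
    (h : ∀ k : Fin n, b k ≤ a (k + 1) - a k) : ∑ k, b k ≤ a n - a 0 :=
  (Finset.sum_le_sum fun k _ => h k).trans_eq <| by
    rw [Fin.sum_univ_eq_sum_range (fun i => a (i + 1) - a i), Finset.sum_range_sub]

section Integral

variable {α : Type*} [MeasurableSpace α] {ν : Measure α}

lemma MeasureTheory.Integrable.sqrt [IsFiniteMeasure ν] {f : α → ℝ} (hf : Integrable f ν) :
    Integrable (fun x => √(f x)) ν := by
  refine ((integrable_const 1).add hf.abs).mono'
    (continuous_sqrt.comp_aestronglyMeasurable hf.1) (ae_of_all _ fun x => ?_)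
  rw [norm_of_nonneg (sqrt_nonneg _), Pi.add_apply]
  exact sqrt_le_iff.2 ⟨by positivity, by nlinarith [le_abs_self (f x), abs_nonneg (f x)]⟩

lemma MeasureTheory.Integrable.sqrt_sq_add_sq_s8 {f g : α → ℝ} (hf : Integrable f ν)
    (hg : Integrable g ν) : Integrable (fun x => √(f x ^ 2 + g x ^ 2)) ν := by
  refine (hf.abs.add hg.abs).mono'
    (continuous_sqrt.comp_aestronglyMeasurable ((hf.1.pow 2).add (hg.1.pow 2)))
    (ae_of_all _ fun x => ?_)
  rw [norm_of_nonneg (sqrt_nonneg _)]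
  exact sqrt_sq_add_sq_le_abs_add_abs _ _

lemma integrable_of_nonneg_of_le [IsFiniteMeasure ν] {f : α → ℝ} (hf : Measurable f)
    (h0 : ∀ x, 0 ≤ f x) (hB : ∃ B, ∀ x, f x ≤ B) : Integrable f ν := by
  obtain ⟨B, hB⟩ := hB
  refine Integrable.of_bound hf.aestronglyMeasurable B (ae_of_all _ fun x => ?_)
  rw [norm_of_nonneg (h0 x)]
  exact hB x

lemma sum_integral_sqrt_sq_add_sq_sub_le {n : ℕ} {φ : Fin n → α → ℝ} {lam : ℕ → α → ℝ}
    (hφ : ∀ k, Integrable (φ k) ν) (hlam : ∀ k ≤ n, Integrable (lam k) ν)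
    (h : ∀ k : Fin n, ∫ x, √(φ k x ^ 2 + lam k x ^ 2) ∂ν ≤ ∫ x, lam (k + 1) x ∂ν) :
    ∑ k : Fin n, ∫ x, (√(φ k x ^ 2 + lam k x ^ 2) - lam k x) ∂ν
      ≤ ∫ x, lam n x ∂ν - ∫ x, lam 0 x ∂ν :=
  Fin.sum_le_sub_of_le_sub (a := fun j => ∫ x, lam j x ∂ν) fun k => by
    rw [integral_sub ((hφ k).sqrt_sq_add_sq_s8 (hlam k k.is_lt.le)) (hlam k k.is_lt.le)]
    exact sub_le_sub_right (h k) _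

lemma ae_le_iSup_essSup {ι : Type*} {s : Finset ι} {g : ι → α → ℝ} {k : ι} (hk : k ∈ s)
    (hg : ∃ B, ∀ x, g k x ≤ B) : ∀ᵐ x ∂ν, g k x ≤ ⨆ j ∈ s, essSup (g j) ν :=
  (ae_le_essSup (Filter.isBoundedUnder_of hg)).mono fun _ hx =>
    hx.trans (Finset.le_ciSup_of_mem (fun j => essSup (g j) ν) hk)

variable [IsProbabilityMeasure ν]

lemma integral_sqrt_le_sqrt_integral {f : α → ℝ} (hf : Integrable f ν) (h0 : 0 ≤ᵐ[ν] f) :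
    ∫ x, √(f x) ∂ν ≤ √(∫ x, f x ∂ν) :=
  strictConcaveOn_sqrt.concaveOn.le_map_integral continuous_sqrt.continuousOn isClosed_Ici h0
    hf hf.sqrt

theorem integral_sqrt_sum_sq_le {ι : Type*} [Fintype ι] {f d : ι → α → ℝ} {L M : ℝ}
    (hd : ∀ k, Integrable (d k) ν) (hd0 : ∀ k, ∀ᵐ x ∂ν, 0 ≤ d k x)
    (hfd : ∀ k, ∀ᵐ x ∂ν, f k x ^ 2 ≤ d k x ^ 2 + 2 * M * d k x)
    (hL : 0 ≤ L) (hLM : L ≤ M) (hdL : ∑ k, ∫ x, d k x ∂ν ≤ L) :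
    ∫ x, √(∑ k, f k x ^ 2) ∂ν ≤ (1 + √2) * √L * √M := by
  set G : α → ℝ := fun x => ∑ k, d k x
  have hG : Integrable G ν := integrable_finsetSum _ fun k _ => hd k
  have hG0 : 0 ≤ᵐ[ν] G := (ae_all_iff.2 hd0).mono fun _ hx => Finset.sum_nonneg fun k _ => hx k
  have hGL : ∫ x, G x ∂ν ≤ L := by
    rwa [integral_finsetSum _ fun k _ => hd k]
  have hpt : ∀ᵐ x ∂ν, √(∑ k, f k x ^ 2) ≤ G x + √(2 * M) * √(G x) := by
    filter_upwards [ae_all_iff.2 hd0, ae_all_iff.2 hfd, hG0] with x hd0x hfdx hGx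
    refine le_add_mul_sqrt_of_sq_le hGx (sqrt_nonneg _) ?_
    rw [sq_sqrt (Finset.sum_nonneg fun k _ => sq_nonneg _), sq_sqrt (by linarith)]
    calc ∑ k, f k x ^ 2 ≤ ∑ k, (d k x ^ 2 + 2 * M * d k x) :=
          Finset.sum_le_sum fun k _ => hfdx k
      _ = ∑ k, d k x ^ 2 + 2 * M * G x := by rw [Finset.sum_add_distrib, Finset.mul_sum]
      _ ≤ G x ^ 2 + 2 * M * G x := by
        gcongr
        exact Finset.sum_sq_le_sq_sum_of_nonneg fun k _ => hd0x k
  calc ∫ x, √(∑ k, f k x ^ 2) ∂ν ≤ ∫ x, (G x + √(2 * M) * √(G x)) ∂ν :=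
        integral_mono_of_nonneg (ae_of_all _ fun _ => sqrt_nonneg _)
          (hG.add (hG.sqrt.const_mul _)) hpt
    _ = ∫ x, G x ∂ν + √(2 * M) * ∫ x, √(G x) ∂ν := by
        rw [integral_add hG (hG.sqrt.const_mul _), integral_const_mul]
    _ ≤ L + √(2 * M) * √L := by
        gcongr
        exact (integral_sqrt_le_sqrt_integral hG hG0).trans (sqrt_le_sqrt hGL)
    _ ≤ (1 + √2) * √L * √M := add_sqrt_two_mul_mul_sqrt_le hL hLM

theorem integral_pi_sqrt_sum_sq_le {ι : Type*} [Fintype ι] {f d : ι → α → ℝ} {L M : ℝ}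
    (hd : ∀ k, Integrable (d k) ν) (hd0 : ∀ k, ∀ᵐ x ∂ν, 0 ≤ d k x)
    (hfd : ∀ k, ∀ᵐ x ∂ν, f k x ^ 2 ≤ d k x ^ 2 + 2 * M * d k x)
    (hL : 0 ≤ L) (hLM : L ≤ M) (hdL : ∑ k, ∫ x, d k x ∂ν ≤ L) :
    ∫ ω : ι → α, √(∑ k, f k (ω k) ^ 2) ∂(Measure.pi fun _ => ν) ≤ (1 + √2) * √L * √M :=
  integral_sqrt_sum_sq_le (f := fun k (ω : ι → α) => f k (ω k))
    (d := fun k (ω : ι → α) => d k (ω k)) (fun k => integrable_comp_eval (hd k))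
    (fun k => (Measure.tendsto_eval_ae_ae (μ := fun _ => ν) (i := k)).eventually (hd0 k))
    (fun k => (Measure.tendsto_eval_ae_ae (μ := fun _ => ν) (i := k)).eventually (hfd k))
    hL hLM
    (by simpa only [integral_comp_eval (μ := fun _ => ν) (hd _).1] using hdL)

end Integral

theorem stmt8_general {Ω : Type*} [MeasurableSpace Ω] (μ : Measure Ω) [IsProbabilityMeasure μ]
    (n : ℕ) (φ : Fin n → Ω → ℝ)
    (hφint : ∀ k, Integrable (φ k) μ)
    (lam : ℕ → Ω → ℝ) (hlam0 : lam 0 = fun _ => 0)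
    (hlamnonneg : ∀ k, 1 ≤ k → k ≤ n → ∀ ω, 0 ≤ lam k ω)
    (hlammeas : ∀ k, 1 ≤ k → k ≤ n → Measurable (lam k))
    (hlambdd : ∀ k, 1 ≤ k → k ≤ n → ∃ M : ℝ, ∀ ω, lam k ω ≤ M)
    (hlam : ∀ k : Fin n,
      (∫ ω, Real.sqrt ((φ k ω) ^ 2 + (lam (k : ℕ) ω) ^ 2) ∂μ)
        ≤ ∫ ω, lam ((k : ℕ) + 1) ω ∂μ) :
    max (∫ ω, Real.sqrt (∑ k, (φ k ω) ^ 2) ∂μ)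
        (∫ ω : Fin n → Ω, Real.sqrt (∑ k, (φ k (ω k)) ^ 2) ∂(Measure.pi fun _ => μ))
      ≤ (1 + Real.sqrt 2) * Real.sqrt (∫ ω, lam n ω ∂μ)
          * Real.sqrt (⨆ k ∈ Finset.Icc 1 n, essSup (lam k) μ) := by
  rcases Nat.eq_zero_or_pos n with rfl | hn
  · simp [hlam0]
  set M := ⨆ k ∈ Finset.Icc 1 n, essSup (lam k) μ
  set L := ∫ ω, lam n ω ∂μ
  have hlamM : ∀ k, 1 ≤ k → k ≤ n → ∀ᵐ ω ∂μ, lam k ω ≤ M := fun k h1 h2 =>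
    ae_le_iSup_essSup (Finset.mem_Icc.2 ⟨h1, h2⟩) (hlambdd k h1 h2)
  have hlamint : ∀ k ≤ n, Integrable (lam k) μ := by
    intro k hk
    rcases Nat.eq_zero_or_pos k with rfl | h1
    · simp [hlam0]
    exact integrable_of_nonneg_of_le (hlammeas k h1 hk) (hlamnonneg k h1 hk) (hlambdd k h1 hk)
  have hL : 0 ≤ L := integral_nonneg (hlamnonneg n hn le_rfl)
  have hLM : L ≤ M := by
    simpa using integral_mono_ae (hlamint n le_rfl) (integrable_const M) (hlamM n hn le_rfl)
  have hlamM_fin : ∀ k : Fin n, ∀ᵐ ω ∂μ, lam k ω ≤ M := by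
    intro k
    rcases Nat.eq_zero_or_pos k with hk | hk
    · rw [hk, hlam0]
      exact ae_of_all _ fun _ => hL.trans hLM
    · exact hlamM k hk k.is_lt.le
  set d : Fin n → Ω → ℝ := fun k ω => √(φ k ω ^ 2 + lam k ω ^ 2) - lam k ω
  have hd : ∀ k, Integrable (d k) μ := fun k =>
    ((hφint k).sqrt_sq_add_sq_s8 (hlamint k k.is_lt.le)).sub (hlamint k k.is_lt.le)
  have hd0 : ∀ k, ∀ᵐ ω ∂μ, 0 ≤ d k ω := fun k =>
    ae_of_all _ fun ω => sub_nonneg.2 (le_sqrt_sq_add_sq _ _)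
  have hφd : ∀ k, ∀ᵐ ω ∂μ, φ k ω ^ 2 ≤ d k ω ^ 2 + 2 * M * d k ω := fun k =>
    (hlamM_fin k).mono fun _ h => sq_le_sqrt_sq_add_sq_sub h
  have hdL : ∑ k, ∫ ω, d k ω ∂μ ≤ L := by
    simpa [hlam0] using sum_integral_sqrt_sq_add_sq_sub_le hφint hlamint hlam
  exact max_le (integral_sqrt_sum_sq_le hd hd0 hφd hL hLM hdL)
    (integral_pi_sqrt_sum_sq_le hd hd0 hφd hL hLM hdL)

/-- the non-linear telescoping lemma, part (ii). -/
theorem stmt8 {Ω : Type*} [MeasurableSpace Ω] (μ : Measure Ω) [IsProbabilityMeasure μ]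
    (n : ℕ) (φ : Fin n → Ω → ℝ)
    (hφnonneg : ∀ k, ∀ ω, 0 ≤ φ k ω)
    (hφint : ∀ k, Integrable (φ k) μ)
    (lam : ℕ → Ω → ℝ) (hlam0 : lam 0 = fun _ => 0)
    (hlamnonneg : ∀ k, 1 ≤ k → k ≤ n → ∀ ω, 0 ≤ lam k ω)
    (hlammeas : ∀ k, 1 ≤ k → k ≤ n → Measurable (lam k))
    (hlambdd : ∀ k, 1 ≤ k → k ≤ n → ∃ M : ℝ, ∀ ω, lam k ω ≤ M)
    (hlam : ∀ k : Fin n,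
      (∫ ω, Real.sqrt ((φ k ω) ^ 2 + (lam (k : ℕ) ω) ^ 2) ∂μ)
        ≤ ∫ ω, lam ((k : ℕ) + 1) ω ∂μ) :
    max (∫ ω, Real.sqrt (∑ k, (φ k ω) ^ 2) ∂μ)
        (∫ ω : Fin n → Ω, Real.sqrt (∑ k, (φ k (ω k)) ^ 2) ∂(Measure.pi fun _ => μ))
      ≤ (1 + Real.sqrt 2) * Real.sqrt (∫ ω, lam n ω ∂μ)
          * Real.sqrt (⨆ k ∈ Finset.Icc 1 n, essSup (lam k) μ) :=
  stmt8_general μ n φ hφint lam hlam0 hlamnonneg hlammeas hlambdd hlam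
end

section
/- Let φ_1,…,φ_n be integrable real-valued random variables on a probability space (Ω,μ), and let ψ_1,…,ψ_n be independent random variables on a probability space (Ω',μ') such that for each k the distribution of ψ_k equals the distribution of φ_k. Then E (∑_{k=1}^n |φ_k|²)^{1/2} ≤ 2 · E (∑_{k=1}^n |ψ_k|²)^{1/2}. Equivalently, ‖(φ_k)_{k=1}^n‖_{L¹(ℓ²)} ≤ 2 ‖(φ_k)_{k=1}^n‖_{ind}. -/
/-!
Write `Xₖ = φₖ²`, `Yₖ = ψₖ²`, `T = ∑ₖ Yₖ` and `Wₖ = T - Yₖ ≤ T`. The increments `√(c + b) - √b`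
of the square root decrease in `b`, so pointwise on `Ω × Ω'`
  `√(∑ₖ Xₖ(ω)) ≤ √T(ω') + ∑ₖ (√(Xₖ(ω) + Wₖ(ω')) - √Wₖ(ω'))`.
Since `Yₖ` has the law of `Xₖ` and is independent of `Wₖ`, the pair `(Xₖ(ω), Wₖ(ω'))` has the
law of `(Yₖ, Wₖ)`, so the `k`-th term has expectation `E(√T - √Wₖ)`. Finally
`∑ₖ (√T - √Wₖ) ≤ √T`, because `√T (√T - √Wₖ) ≤ T - Wₖ = Yₖ`.
-/

open MeasureTheory ProbabilityTheory Finset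

namespace Real

lemma sqrt_add_sub_sqrt_le_of_le {a b c : ℝ} (hc : 0 ≤ c) (ha : 0 ≤ a) (hab : a ≤ b) :
    √(c + b) - √b ≤ √(c + a) - √a := by
  have hca := sq_sqrt (add_nonneg hc ha)
  have hcb := sq_sqrt (add_nonneg hc (ha.trans hab))
  have hsa := sq_sqrt ha
  have hsb := sq_sqrt (ha.trans hab)
  have hab' : √a ≤ √b := sqrt_le_sqrt hab
  have ha' : √a ≤ √(c + a) := sqrt_le_sqrt (by linarith)
  have hb' : √b ≤ √(c + b) := sqrt_le_sqrt (by linarith)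
  nlinarith [sqrt_nonneg a, sqrt_nonneg b]

lemma sqrt_add_sub_sqrt_le_sqrt {b c : ℝ} (hc : 0 ≤ c) (hb : 0 ≤ b) :
    √(c + b) - √b ≤ √c := by
  simpa using sqrt_add_sub_sqrt_le_of_le hc le_rfl hb

lemma sqrt_sum_le_sqrt_add_sum_sqrt_add_sub_sqrt {ι : Type*} (s : Finset ι) {x w : ι → ℝ}
    {t : ℝ} (hx : ∀ i, 0 ≤ x i) (hw : ∀ i, 0 ≤ w i) (hwt : ∀ i, w i ≤ t) (ht : 0 ≤ t) :
    √(∑ i ∈ s, x i) ≤ √t + ∑ i ∈ s, (√(x i + w i) - √(w i)) := by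
  classical
  have key : √(t + ∑ i ∈ s, x i) ≤ √t + ∑ i ∈ s, (√(x i + w i) - √(w i)) := by
    induction s using Finset.induction_on with
    | empty => simp
    | insert a s has ih =>
      have hs : 0 ≤ ∑ i ∈ s, x i := sum_nonneg fun i _ => hx i
      have step :=
        sqrt_add_sub_sqrt_le_of_le (hx a) (hw a) (le_add_of_le_of_nonneg (hwt a) hs)
      rw [sum_insert has, sum_insert has, add_left_comm]
      linarith
  exact (sqrt_le_sqrt (le_add_of_nonneg_left ht)).trans key

lemma sqrt_sum_le_sum_sqrt {ι : Type*} (s : Finset ι) {x : ι → ℝ} (hx : ∀ i, 0 ≤ x i) :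
    √(∑ i ∈ s, x i) ≤ ∑ i ∈ s, √(x i) := by
  simpa using
    sqrt_sum_le_sqrt_add_sum_sqrt_add_sub_sqrt s hx (fun _ => le_rfl) (fun _ => le_rfl) le_rfl

lemma sum_sqrt_sub_sqrt_sum_erase_le {ι : Type*} [DecidableEq ι] (s : Finset ι) {y : ι → ℝ}
    (hy : ∀ i, 0 ≤ y i) :
    ∑ k ∈ s, (√(∑ i ∈ s, y i) - √(∑ i ∈ s.erase k, y i)) ≤ √(∑ i ∈ s, y i) := by
  set T := ∑ i ∈ s, y i
  have hT : 0 ≤ T := sum_nonneg fun i _ => hy i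
  rcases (sqrt_nonneg T).eq_or_lt with hzero | hpos
  · rw [← hzero]
    exact sum_nonpos fun k _ => by linarith [sqrt_nonneg (∑ i ∈ s.erase k, y i)]
  have hterm : ∀ k ∈ s, √T * (√T - √(∑ i ∈ s.erase k, y i)) ≤ y k := by
    intro k hk
    have hW : 0 ≤ ∑ i ∈ s.erase k, y i := sum_nonneg fun i _ => hy i
    have hWT : y k + ∑ i ∈ s.erase k, y i = T := add_sum_erase s y hk
    have hle : √(∑ i ∈ s.erase k, y i) ≤ √T := sqrt_le_sqrt (by linarith [hy k])
    nlinarith [sq_sqrt hT, sq_sqrt hW, sqrt_nonneg (∑ i ∈ s.erase k, y i)]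
  refine le_of_mul_le_mul_left ?_ hpos
  calc √T * ∑ k ∈ s, (√T - √(∑ i ∈ s.erase k, y i))
      ≤ ∑ k ∈ s, y k := by rw [mul_sum]; exact sum_le_sum hterm
    _ = √T * √T := (mul_self_sqrt hT).symm

end Real

section

variable {Ω Ω' : Type*} [MeasurableSpace Ω] [MeasurableSpace Ω']
  {μ : Measure Ω} {μ' : Measure Ω'}

lemma integrable_sqrt_add_sub_sqrt {f g : Ω → ℝ} (hf : Measurable f) (hg : Measurable g)
    (hf0 : ∀ ω, 0 ≤ f ω) (hg0 : ∀ ω, 0 ≤ g ω) (hint : Integrable (fun ω => √(f ω)) μ) :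
    Integrable (fun ω => √(f ω + g ω) - √(g ω)) μ := by
  refine hint.mono' (by fun_prop) (ae_of_all _ fun ω => ?_)
  have hmono : √(g ω) ≤ √(f ω + g ω) := Real.sqrt_le_sqrt (le_add_of_nonneg_left (hf0 ω))
  rw [Real.norm_of_nonneg (sub_nonneg.mpr hmono)]
  exact Real.sqrt_add_sub_sqrt_le_sqrt (hf0 ω) (hg0 ω)

lemma integral_prod_eq_of_identDistrib_of_indepFun [SFinite μ] [IsFiniteMeasure μ']
    {β γ E : Type*} [MeasurableSpace β] [MeasurableSpace γ] [NormedAddCommGroup E]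
    [NormedSpace ℝ E] {X : Ω → β} {Y : Ω' → β} {Z : Ω' → γ} (hX : Measurable X)
    (hY : Measurable Y) (hZ : Measurable Z) (hXY : IdentDistrib X Y μ μ') (hYZ : IndepFun Y Z μ')
    {H : β × γ → E} (hH : StronglyMeasurable H) :
    ∫ p, H (X p.1, Z p.2) ∂(μ.prod μ') = ∫ ω, H (Y ω, Z ω) ∂μ' := by
  have hmap : (μ.prod μ').map (Prod.map X Z) = μ'.map (fun ω => (Y ω, Z ω)) := by
    rw [← Measure.map_prod_map _ _ hX hZ, hXY.map_eq,
      (indepFun_iff_map_prod_eq_prod_map_map hY.aemeasurable hZ.aemeasurable).mp hYZ]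
  change ∫ p, H (Prod.map X Z p) ∂(μ.prod μ') = _
  rw [← integral_map (hX.prodMap hZ).aemeasurable hH.aestronglyMeasurable, hmap,
    integral_map (hY.prodMk hZ).aemeasurable hH.aestronglyMeasurable]

lemma integral_sqrt_sum_le_integral_prod {ι : Type*} [Fintype ι] [IsProbabilityMeasure μ]
    [IsProbabilityMeasure μ'] {X : ι → Ω → ℝ} {W : ι → Ω' → ℝ} {T : Ω' → ℝ}
    (hX : ∀ k, Measurable (X k)) (hW : ∀ k, Measurable (W k)) (hX0 : ∀ k ω, 0 ≤ X k ω)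
    (hW0 : ∀ k ω, 0 ≤ W k ω) (hWT : ∀ k ω, W k ω ≤ T ω) (hT0 : ∀ ω, 0 ≤ T ω)
    (hint : ∀ k, Integrable (fun ω => √(X k ω)) μ) (hT : Integrable (fun ω => √(T ω)) μ') :
    ∫ ω, √(∑ k, X k ω) ∂μ ≤ ∫ ω, √(T ω) ∂μ'
      + ∑ k, ∫ p, (√(X k p.1 + W k p.2) - √(W k p.2)) ∂(μ.prod μ') := by
  have hincr : ∀ k, Integrable (fun p : Ω × Ω' => √(X k p.1 + W k p.2) - √(W k p.2))
      (μ.prod μ') := fun k =>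
    integrable_sqrt_add_sub_sqrt ((hX k).comp measurable_fst) ((hW k).comp measurable_snd)
      (fun p => hX0 k p.1) (fun p => hW0 k p.2) ((hint k).comp_fst μ')
  calc ∫ ω, √(∑ k, X k ω) ∂μ = ∫ p, √(∑ k, X k p.1) ∂(μ.prod μ') := by
        simpa using (integral_fun_fst (ν := μ') fun ω => √(∑ k, X k ω)).symm
    _ ≤ ∫ p, (√(T p.2) + ∑ k, (√(X k p.1 + W k p.2) - √(W k p.2))) ∂(μ.prod μ') :=
        integral_mono_of_nonneg (ae_of_all _ fun _ => Real.sqrt_nonneg _)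
          ((hT.comp_snd μ).add (integrable_finsetSum _ fun k _ => hincr k))
          (ae_of_all _ fun p => Real.sqrt_sum_le_sqrt_add_sum_sqrt_add_sub_sqrt _
            (fun k => hX0 k p.1) (fun k => hW0 k p.2) (fun k => hWT k p.2) (hT0 p.2))
    _ = ∫ ω, √(T ω) ∂μ' + ∑ k, ∫ p, (√(X k p.1 + W k p.2) - √(W k p.2)) ∂(μ.prod μ') := by
        rw [integral_add (hT.comp_snd μ) (integrable_finsetSum _ fun k _ => hincr k),
          integral_finsetSum _ fun k _ => hincr k]
        simpa using integral_fun_snd (μ := μ) fun ω => √(T ω)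

theorem integral_sqrt_sum_le_two_mul_of_iIndepFun [IsProbabilityMeasure μ]
    [IsProbabilityMeasure μ'] {ι : Type*} [Fintype ι] {X : ι → Ω → ℝ} {Y : ι → Ω' → ℝ}
    (hX : ∀ k, Measurable (X k)) (hY : ∀ k, Measurable (Y k)) (hX0 : ∀ k ω, 0 ≤ X k ω)
    (hY0 : ∀ k ω, 0 ≤ Y k ω) (hint : ∀ k, Integrable (fun ω => √(X k ω)) μ)
    (hindep : iIndepFun Y μ') (hident : ∀ k, IdentDistrib (X k) (Y k) μ μ') :
    ∫ ω, √(∑ k, X k ω) ∂μ ≤ 2 * ∫ ω, √(∑ k, Y k ω) ∂μ' := by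
  classical
  set T : Ω' → ℝ := fun ω => ∑ k, Y k ω
  set W : ι → Ω' → ℝ := fun k ω => ∑ j ∈ univ.erase k, Y j ω
  have hW : ∀ k, Measurable (W k) := fun k => Finset.measurable_sum _ fun j _ => hY j
  have hW0 : ∀ k ω, 0 ≤ W k ω := fun k ω => sum_nonneg fun j _ => hY0 j ω
  have hYW : ∀ k ω, Y k ω + W k ω = T ω := fun k ω => add_sum_erase univ (Y · ω) (mem_univ k)
  have hWT : ∀ k ω, W k ω ≤ T ω := fun k ω => by linarith [hYW k ω, hY0 k ω]
  have hsqrtY : ∀ k, Integrable (fun ω => √(Y k ω)) μ' := fun k =>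
    ((hident k).comp Real.continuous_sqrt.measurable).integrable_snd (hint k)
  have hT : Integrable (fun ω => √(T ω)) μ' := by
    refine (integrable_finsetSum univ fun k _ => hsqrtY k).mono' (by fun_prop)
      (ae_of_all _ fun ω => ?_)
    rw [Real.norm_of_nonneg (Real.sqrt_nonneg _)]
    simpa using Real.sqrt_sum_le_sum_sqrt univ fun k => hY0 k ω
  have hincr : ∀ k, Integrable (fun ω => √(Y k ω + W k ω) - √(W k ω)) μ' := fun k =>
    integrable_sqrt_add_sub_sqrt (hY k) (hW k) (hY0 k) (hW0 k) (hsqrtY k)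
  have hindep_erase : ∀ k, IndepFun (Y k) (W k) μ' := fun k => by
    simpa only [W, Finset.sum_fn] using
      (hindep.indepFun_finsetSum_of_notMem hY (notMem_erase k univ)).symm
  have hdecouple : ∀ k, ∫ p, (√(X k p.1 + W k p.2) - √(W k p.2)) ∂(μ.prod μ')
      = ∫ ω, (√(Y k ω + W k ω) - √(W k ω)) ∂μ' := fun k =>
    integral_prod_eq_of_identDistrib_of_indepFun (H := fun q : ℝ × ℝ => √(q.1 + q.2) - √q.2)
      (hX k) (hY k) (hW k) (hident k) (hindep_erase k) (by fun_prop)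
  have hincr_sum : ∫ ω, ∑ k, (√(Y k ω + W k ω) - √(W k ω)) ∂μ' ≤ ∫ ω, √(T ω) ∂μ' :=
    integral_mono (integrable_finsetSum _ fun k _ => hincr k) hT fun ω => by
      simpa only [hYW] using Real.sum_sqrt_sub_sqrt_sum_erase_le univ fun k => hY0 k ω
  calc ∫ ω, √(∑ k, X k ω) ∂μ
      ≤ ∫ ω, √(T ω) ∂μ' + ∑ k, ∫ p, (√(X k p.1 + W k p.2) - √(W k p.2)) ∂(μ.prod μ') :=
        integral_sqrt_sum_le_integral_prod hX hW hX0 hW0 hWT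
          (fun ω => sum_nonneg fun k _ => hY0 k ω) hint hT
    _ = ∫ ω, √(T ω) ∂μ' + ∫ ω, ∑ k, (√(Y k ω + W k ω) - √(W k ω)) ∂μ' := by
        rw [integral_finsetSum _ fun k _ => hincr k]
        simp only [hdecouple]
    _ ≤ 2 * ∫ ω, √(T ω) ∂μ' := by linarith

end

/-- comparison of the `L¹(ℓ²)` norm with the independent-sum norm
(Corollary `2indgeqL1l2`). -/
theorem stmt9 {Ω Ω' : Type*} [MeasurableSpace Ω] [MeasurableSpace Ω']
    (μ : Measure Ω) (μ' : Measure Ω') [IsProbabilityMeasure μ] [IsProbabilityMeasure μ']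
    (n : ℕ) (φ : Fin n → Ω → ℝ) (ψ : Fin n → Ω' → ℝ)
    (hφmeas : ∀ k, Measurable (φ k))
    (hφint : ∀ k, Integrable (φ k) μ)
    (hψmeas : ∀ k, Measurable (ψ k))
    (hindep : ProbabilityTheory.iIndepFun ψ μ')
    (hdist : ∀ k, μ.map (φ k) = μ'.map (ψ k)) :
    (∫ ω, Real.sqrt (∑ k, |φ k ω| ^ 2) ∂μ)
      ≤ 2 * ∫ ω', Real.sqrt (∑ k, |ψ k ω'| ^ 2) ∂μ' := by
  have hsq : Measurable fun x : ℝ => x ^ 2 := by fun_prop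
  simp_rw [sq_abs]
  refine integral_sqrt_sum_le_two_mul_of_iIndepFun (fun k => (hφmeas k).pow_const 2)
    (fun k => (hψmeas k).pow_const 2) (fun _ _ => sq_nonneg _) (fun _ _ => sq_nonneg _)
    (fun k => by simpa [Real.sqrt_sq_eq_abs] using (hφint k).abs)
    (hindep.comp (fun _ x => x ^ 2) fun _ => hsq) fun k => ?_
  exact (IdentDistrib.mk (hφmeas k).aemeasurable (hψmeas k).aemeasurable (hdist k)).comp hsq
end

section
/- Let ‖·‖ be a norm on ℂⁿ satisfying ‖x‖ ≤ ∑_{i=1}^n |x_i| and ‖(x_1,…,x_n)‖ = ‖(|x_1|,…,|x_n|)‖ for every x ∈ ℂⁿ, and let ‖v‖_* = sup{ |⟨v,w⟩| : w ∈ ℂⁿ, ‖w‖ ≤ 1 } denote the dual norm. Let f_1,…,f_n : T → ℂ be continuously differentiable 2π-periodic functions with ∫_T |f_k| dμ > 0 for each k, set Ber f_k = (∫_T |f_k'| dμ)/(∫_T |f_k| dμ), and let h(t) = ‖(f_1(t),…,f_n(t))‖ — a Lipschitz, hence almost everywhere differentiable, function — with ∫_T h dμ > 0. Then (∫_T |h'|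 dμ)/(∫_T h dμ) ≤ ‖(Ber f_1,…,Ber f_n)‖_*. -/
/-!
Since `N` is dominated by the `ℓ¹` norm, `|h(s) - h(t)| ≤ ∑ₖ |f_k(s) - f_k(t)|`, hence
`|h'| ≤ ∑ₖ |f_k'|` and `∫ |h'| ≤ ∑ₖ ∫ |f_k'| = ∑ₖ Ber f_k · w_k · ∫ h` with `w_k = ∫ |f_k| / ∫ h`.
By Jensen's inequality for the convex function `N` and its invariance under taking moduli,
`N(∫ |f_1|, …, ∫ |f_n|) ≤ ∫ N(|f_1|, …, |f_n|) = ∫ h`, i.e. `N(w) ≤ 1`, so `w` is an admissible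
vector in the definition of the dual norm.
-/

open MeasureTheory Real Filter Topology

namespace Seminorm

variable {E : Type*} [NormedAddCommGroup E] [NormedSpace ℝ E]

theorem continuous_of_le_sum_norm {ι F : Type*} [Fintype ι] [NormedAddCommGroup F]
    [NormedSpace ℝ F] {p : Seminorm ℝ (ι → F)} (hp : ∀ x, p x ≤ ∑ i, ‖x i‖) : Continuous p := by
  refine Seminorm.continuous_of_continuousAt_zero ?_
  have hsum : Tendsto (fun x : ι → F => ∑ i, ‖x i‖) (𝓝 0) (𝓝 0) := by
    simpa using ((_root_.continuous_finsetSum _ fun i _ => (continuous_apply i).norm).tendsto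
      (0 : ι → F))
  simpa [ContinuousAt] using squeeze_zero (fun x => apply_nonneg p x) hp hsum

theorem exists_pos_mul_norm_le [ProperSpace E] {p : Seminorm ℝ E} (hp : Continuous p)
    (hdef : ∀ x, p x = 0 → x = 0) : ∃ ε > 0, ∀ x, ε * ‖x‖ ≤ p x := by
  rcases subsingleton_or_nontrivial E with _ | _
  · exact ⟨1, one_pos, fun x => by simp [Subsingleton.elim x 0]⟩
  obtain ⟨x₀, hx₀, hmin⟩ := (isCompact_sphere (0 : E) 1).exists_isMinOn
    (NormedSpace.sphere_nonempty.2 zero_le_one) hp.continuousOn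
  have hpos : 0 < p x₀ :=
    (apply_nonneg p x₀).lt_of_ne' fun h => by simp [hdef _ h] at hx₀
  refine ⟨p x₀, hpos, fun x => ?_⟩
  rcases eq_or_ne x 0 with rfl | hx
  · simp
  have hnx : 0 < ‖x‖ := norm_pos_iff.2 hx
  have hunit : ‖x‖⁻¹ • x ∈ Metric.sphere (0 : E) 1 := by
    simp [norm_smul, hnx.ne']
  have := hmin hunit
  rw [Set.mem_ofPred_eq, map_smul_eq_mul, norm_inv, norm_norm] at this
  calc p x₀ * ‖x‖ ≤ ‖x‖⁻¹ * p x * ‖x‖ := by gcongr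
    _ = p x := by field_simp

theorem isCompact_closedBall_zero [ProperSpace E] {p : Seminorm ℝ E} (hp : Continuous p)
    (hdef : ∀ x, p x = 0 → x = 0) (r : ℝ) : IsCompact (p.closedBall 0 r) := by
  obtain ⟨ε, hε, hle⟩ := exists_pos_mul_norm_le hp hdef
  refine Metric.isCompact_of_isClosed_isBounded ?_ ?_
  · rw [closedBall_zero_eq]
    exact isClosed_le hp continuous_const
  · refine (Metric.isBounded_closedBall (x := (0 : E)) (r := r / ε)).subset fun x hx => ?_
    rw [mem_closedBall_zero] at hx
    rw [mem_closedBall_zero_iff, le_div_iff₀ hε]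
    linarith [hle x]

theorem map_intervalIntegral_le [CompleteSpace E] (p : Seminorm ℝ E) (hp : Continuous p)
    {g : ℝ → E} {a b : ℝ} (hab : a ≤ b) (hg : IntervalIntegrable g volume a b)
    (hpg : IntervalIntegrable (fun t => p (g t)) volume a b) :
    p (∫ t in a..b, g t) ≤ ∫ t in a..b, p (g t) := by
  rcases hab.eq_or_lt with rfl | hlt
  · simp
  have hvol : volume.real (Set.Ioc a b) = b - a := by simp [hab]
  have hJensen := p.convexOn.map_set_average_le hp.continuousOn isClosed_univ
    (by simp [hlt]) (by simp) (Eventually.of_forall fun _ => Set.mem_univ _)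
    hg.1 hpg.1
  rw [setAverage_eq, setAverage_eq, map_smul_eq_mul, hvol, smul_eq_mul, Real.norm_eq_abs,
    abs_of_pos (inv_pos.2 (sub_pos.2 hlt))] at hJensen
  rw [intervalIntegral.integral_of_le hab, intervalIntegral.integral_of_le hab]
  exact le_of_mul_le_mul_left hJensen (inv_pos.2 (sub_pos.2 hlt))

end Seminorm

theorem norm_deriv_le_sum_norm_deriv {ι E F : Type*} [Fintype ι] [NormedAddCommGroup E]
    [NormedSpace ℝ E] [NormedAddCommGroup F] [NormedSpace ℝ F] {h : ℝ → F} {f : ι → ℝ → E}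
    {t : ℝ} (hf : ∀ i, DifferentiableAt ℝ (f i) t)
    (hbound : ∀ s, ‖h s - h t‖ ≤ ∑ i, ‖f i s - f i t‖) :
    ‖deriv h t‖ ≤ ∑ i, ‖deriv (f i) t‖ := by
  by_cases hh : DifferentiableAt ℝ h t
  swap
  · rw [deriv_zero_of_not_differentiableAt hh, norm_zero]
    positivity
  have hslope : ∀ s, ‖slope h t s‖ ≤ ∑ i, ‖slope (f i) t s‖ := fun s => by
    simp only [slope_def_module, norm_smul, ← Finset.mul_sum]
    gcongr
    exact hbound s
  refine le_of_tendsto_of_tendsto' (b := 𝓝[≠] t) ?_ ?_ hslope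
  · exact (hasDerivAt_iff_tendsto_slope.1 hh.hasDerivAt).norm
  · exact tendsto_finsetSum _ fun i _ =>
      (hasDerivAt_iff_tendsto_slope.1 (hf i).hasDerivAt).norm

theorem intervalIntegral_norm_deriv_le_sum {ι E F : Type*} [Fintype ι] [NormedAddCommGroup E]
    [NormedSpace ℝ E] [NormedAddCommGroup F] [NormedSpace ℝ F] [CompleteSpace F] {h : ℝ → F}
    {f : ι → ℝ → E} (hf : ∀ i, ContDiff ℝ 1 (f i))
    (hbound : ∀ s t, ‖h s - h t‖ ≤ ∑ i, ‖f i s - f i t‖) {a b : ℝ} (hab : a ≤ b) :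
    ∫ t in a..b, ‖deriv h t‖ ≤ ∑ i, ∫ t in a..b, ‖deriv (f i) t‖ := by
  have hderiv : ∀ t, ‖deriv h t‖ ≤ ∑ i, ‖deriv (f i) t‖ := fun t =>
    norm_deriv_le_sum_norm_deriv (fun i => ((hf i).differentiable one_ne_zero).differentiableAt)
      fun s => hbound s t
  have hf' : ∀ i, Continuous (deriv (f i)) := fun i => (hf i).continuous_deriv le_rfl
  have hdom : Continuous fun t => ∑ i, ‖deriv (f i) t‖ := by fun_prop
  rw [← intervalIntegral.integral_finsetSum fun i _ => (hf' i).norm.intervalIntegrable _ _]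
  refine intervalIntegral.integral_mono_on hab ?_ (hdom.intervalIntegrable _ _)
    fun t _ => hderiv t
  refine (hdom.intervalIntegrable _ _).mono_fun (aestronglyMeasurable_deriv h _).norm
    (Eventually.of_forall fun t => ?_)
  simpa only [norm_norm, Real.norm_of_nonneg (by positivity : (0 : ℝ) ≤ ∑ i, ‖deriv (f i) t‖)]
    using hderiv t

theorem intervalIntegral_eval {ι E : Type*} [Fintype ι] [NormedAddCommGroup E]
    [NormedSpace ℝ E] [CompleteSpace E] {G : ℝ → ι → E} {a b : ℝ}
    (hG : IntervalIntegrable G volume a b) (i : ι) :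
    (∫ t in a..b, G t) i = ∫ t in a..b, G t i :=
  ((ContinuousLinearMap.proj (R := ℝ) i).intervalIntegral_comp_comm hG).symm

-- `sSup` of an unbounded set is `0`, so bounds on `dualNorm N` need `N` definite.
noncomputable def dualNorm {ι : Type*} [Fintype ι] (N : (ι → ℂ) → ℝ) (v : ι → ℂ) : ℝ :=
  sSup {r : ℝ | ∃ w : ι → ℂ, N w ≤ 1 ∧ r = ‖∑ i, v i * w i‖}

theorem le_dualNorm {ι : Type*} [Fintype ι] {p : Seminorm ℝ (ι → ℂ)} (hp : Continuous p)
    (hdef : ∀ x, p x = 0 → x = 0) (v : ι → ℂ) {w : ι → ℂ} (hw : p w ≤ 1) :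
    ‖∑ i, v i * w i‖ ≤ dualNorm p v := by
  refine le_csSup ?_ ⟨w, hw, rfl⟩
  obtain ⟨C, hC⟩ := (p.isCompact_closedBall_zero hp hdef 1).bddAbove_image
    (f := fun w : ι → ℂ => ‖∑ i, v i * w i‖) (by fun_prop)
  refine ⟨C, ?_⟩
  rintro r ⟨u, hu, rfl⟩
  exact hC ⟨u, (p.mem_closedBall_zero).2 hu, rfl⟩

theorem sum_div_le_dualNorm {ι : Type*} [Fintype ι] {p : Seminorm ℝ (ι → ℂ)}
    (hp : Continuous p) (hdef : ∀ x, p x = 0 → x = 0) (a m : ι → ℝ) (hm : ∀ i, m i ≠ 0)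
    {I : ℝ} (hI : 0 < I) (hmI : p (fun i => (m i : ℂ)) ≤ I) :
    (∑ i, a i) / I ≤ dualNorm p fun i => ((a i / m i : ℝ) : ℂ) := by
  set w : ι → ℂ := I⁻¹ • fun i => (m i : ℂ)
  have hw : p w ≤ 1 := by
    rw [map_smul_eq_mul, Real.norm_of_nonneg (inv_nonneg.2 hI.le), inv_mul_le_iff₀ hI, mul_one]
    exact hmI
  have hsum : ∑ i, ((a i / m i : ℝ) : ℂ) * w i = (((∑ i, a i) / I : ℝ) : ℂ) := by
    simp only [w, Pi.smul_apply, Complex.real_smul, Finset.sum_div]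
    push_cast
    refine Finset.sum_congr rfl fun i _ => ?_
    field_simp [Complex.ofReal_ne_zero.2 (hm i)]
  calc (∑ i, a i) / I ≤ ‖(((∑ i, a i) / I : ℝ) : ℂ)‖ := by
        rw [Complex.norm_real]; exact Real.le_norm_self _
    _ = ‖∑ i, ((a i / m i : ℝ) : ℂ) * w i‖ := by rw [hsum]
    _ ≤ dualNorm p _ := le_dualNorm hp hdef _ hw

theorem stmt14_general (n : ℕ) (Nn : (Fin n → ℂ) → ℝ)
    (hNeq0 : ∀ x, Nn x = 0 ↔ x = 0)
    (hNsmul : ∀ (a : ℂ) (x : Fin n → ℂ), Nn (a • x) = ‖a‖ * Nn x)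
    (hNadd : ∀ x y : Fin n → ℂ, Nn (x + y) ≤ Nn x + Nn y)
    (hNl1 : ∀ x : Fin n → ℂ, Nn x ≤ ∑ i, ‖x i‖)
    (hNabs : ∀ x : Fin n → ℂ, Nn x = Nn fun i => (‖x i‖ : ℂ))
    (f : Fin n → ℝ → ℂ)
    (hf : ∀ k, ContDiff ℝ 1 (f k))
    (hfpos : ∀ k, 0 < ∫ t in (0 : ℝ)..(2 * π), ‖f k t‖)
    (hhpos : 0 < ∫ t in (0 : ℝ)..(2 * π), Nn fun i => f i t) :
    (∫ t in (0 : ℝ)..(2 * π), |deriv (fun s => Nn fun i => f i s) t|) /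
        (∫ t in (0 : ℝ)..(2 * π), Nn fun i => f i t)
      ≤ sSup {r : ℝ | ∃ w : Fin n → ℂ, Nn w ≤ 1 ∧
          r = ‖∑ i, (((∫ t in (0 : ℝ)..(2 * π), ‖deriv (f i) t‖) /
              (∫ t in (0 : ℝ)..(2 * π), ‖f i t‖) : ℝ) : ℂ) * w i‖} := by
  set p : Seminorm ℝ (Fin n → ℂ) := (Seminorm.of Nn hNadd hNsmul).restrictScalars ℝ
  have hp : Continuous p := Seminorm.continuous_of_le_sum_norm hNl1
  set h : ℝ → ℝ := fun s => Nn fun i => f i s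
  have h2π : (0 : ℝ) ≤ 2 * π := by positivity
  have hint : (∫ t in (0 : ℝ)..(2 * π), |deriv h t|)
      ≤ ∑ i, ∫ t in (0 : ℝ)..(2 * π), ‖deriv (f i) t‖ :=
    intervalIntegral_norm_deriv_le_sum hf (fun s t => (p.norm_sub_map_le_sub _ _).trans (hNl1 _))
      h2π
  have hG : Continuous fun t i => (‖f i t‖ : ℂ) :=
    continuous_pi fun i => by have := (hf i).continuous; fun_prop
  have hJensen : p (fun i => ((∫ t in (0 : ℝ)..(2 * π), ‖f i t‖ : ℝ) : ℂ))
      ≤ ∫ t in (0 : ℝ)..(2 * π), h t :=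
    calc p (fun i => ((∫ t in (0 : ℝ)..(2 * π), ‖f i t‖ : ℝ) : ℂ))
        = p (∫ t in (0 : ℝ)..(2 * π), fun i => (‖f i t‖ : ℂ)) := by
          congr 1
          ext i
          rw [intervalIntegral_eval (hG.intervalIntegrable _ _), intervalIntegral.integral_ofReal]
      _ ≤ ∫ t in (0 : ℝ)..(2 * π), p fun i => (‖f i t‖ : ℂ) :=
          p.map_intervalIntegral_le hp h2π (hG.intervalIntegrable _ _)
            ((hp.comp hG).intervalIntegrable _ _)
      _ = ∫ t in (0 : ℝ)..(2 * π), h t := intervalIntegral.integral_congr fun t _ => (hNabs _).symm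
  calc _ ≤ (∑ i, ∫ t in (0 : ℝ)..(2 * π), ‖deriv (f i) t‖) / ∫ t in (0 : ℝ)..(2 * π), h t :=
        div_le_div_of_nonneg_right hint hhpos.le
    _ ≤ _ := sum_div_le_dualNorm hp (fun x => (hNeq0 x).1) _ _ (fun i => (hfpos i).ne') hhpos
        hJensen

/-- Lemma `ber`: for a norm `N` on `ℂⁿ` dominated by the `ℓ¹` norm and
invariant under taking coordinatewise moduli, the Bernstein quotient of
`h(t) = N(f₁(t),…,f_n(t))` is at most the dual norm of the vector of Bernstein
quotients of the `f_k`. -/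
theorem stmt14 (n : ℕ) (Nn : (Fin n → ℂ) → ℝ)
    (hN0 : ∀ x, 0 ≤ Nn x)
    (hNeq0 : ∀ x, Nn x = 0 ↔ x = 0)
    (hNsmul : ∀ (a : ℂ) (x : Fin n → ℂ), Nn (a • x) = ‖a‖ * Nn x)
    (hNadd : ∀ x y : Fin n → ℂ, Nn (x + y) ≤ Nn x + Nn y)
    (hNl1 : ∀ x : Fin n → ℂ, Nn x ≤ ∑ i, ‖x i‖)
    (hNabs : ∀ x : Fin n → ℂ, Nn x = Nn fun i => (‖x i‖ : ℂ))
    (f : Fin n → ℝ → ℂ)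
    (hf : ∀ k, ContDiff ℝ 1 (f k))
    (hper : ∀ k, Function.Periodic (f k) (2 * π))
    (hfpos : ∀ k, 0 < ∫ t in (0 : ℝ)..(2 * π), ‖f k t‖)
    (hhpos : 0 < ∫ t in (0 : ℝ)..(2 * π), Nn fun i => f i t) :
    (∫ t in (0 : ℝ)..(2 * π), |deriv (fun s => Nn fun i => f i s) t|) /
        (∫ t in (0 : ℝ)..(2 * π), Nn fun i => f i t)
      ≤ sSup {r : ℝ | ∃ w : Fin n → ℂ, Nn w ≤ 1 ∧
          r = ‖∑ i, (((∫ t in (0 : ℝ)..(2 * π), ‖deriv (f i) t‖) /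
              (∫ t in (0 : ℝ)..(2 * π), ‖f i t‖) : ℝ) : ℂ) * w i‖} :=
  stmt14_general n Nn hNeq0 hNsmul hNadd hNl1 hNabs f hf hfpos hhpos
end
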